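/- arXiv:math/9909020 — 8 statements merged into one kernel-verified Lean document; each statement's English description precedes it below -/
import Mathlib

section
/- Let g be a non-degenerate quadratic form on a finite-dimensional Z/2-vector space V, T orthogonal with respect to g, and a ∈ V with g(a) = 1. Let T_a(x) = x + B(x,a)·a. If F(T) ⊆ F(T_a) then dim F(T∘T_a) = dim F(T) + 1, and if F(T) ⊄ F(T_a) then dim F(T∘T_a) = dim F(T) − 1, where F(S) denotes the fixed-point subspace of a linear map S. -/
/-- Auxiliary rank lemma: if a linear functional is nonzero on a submodule `W`, then the
kernel of its restriction to `W` has corank one in `W`. -/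
theorem aux_rank6 {V : Type*} [AddCommGroup V] [Module (ZMod 2) V]
    [FiniteDimensional (ZMod 2) V]
    (W : Submodule (ZMod 2) V) (ψ : V →ₗ[ZMod 2] ZMod 2) (x : V) (hx : x ∈ W)
    (hψ : ψ x ≠ 0) :
    Module.finrank (ZMod 2) ↥(W ⊓ LinearMap.ker ψ) + 1 = Module.finrank (ZMod 2) ↥W := by
  have one' : ∀ c : ZMod 2, c ≠ 0 → c = 1 := by decide
  have hψ1 : ψ x = 1 := one' _ hψ
  set ρ : ↥W →ₗ[ZMod 2] ZMod 2 := ψ ∘ₗ W.subtype with hρ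
  have hrange : LinearMap.range ρ = ⊤ := by
    rw [Submodule.eq_top_iff']
    intro c
    refine ⟨c • ⟨x, hx⟩, ?_⟩
    simp [hρ, hψ1]
  have hker : Module.finrank (ZMod 2) ↥(LinearMap.ker ρ) =
      Module.finrank (ZMod 2) ↥(W ⊓ LinearMap.ker ψ) := by
    have h1 : LinearMap.ker ρ = (LinearMap.ker ψ).comap W.subtype := by
      rw [hρ, LinearMap.ker_comp]
    rw [h1, ← Submodule.finrank_map_subtype_eq W ((LinearMap.ker ψ).comap W.subtype),
      Submodule.map_comap_subtype]
  have hrn := LinearMap.finrank_range_add_finrank_ker ρ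
  rw [hrange, finrank_top, Module.finrank_self, hker] at hrn
  omega

theorem stmt6 {V : Type*} [AddCommGroup V] [Module (ZMod 2) V]
    [FiniteDimensional (ZMod 2) V]
    (B : LinearMap.BilinForm (ZMod 2) V) (g : V → ZMod 2)
    (hquad : ∀ x y, g (x + y) = g x + g y + B x y)
    (hnd : ∀ x : V, x ≠ 0 → ∃ y, B x y ≠ 0)
    (T : V →ₗ[ZMod 2] V) (hT : ∀ x, g (T x) = g x)
    (a : V) (hga : g a = 1)
    (Ta : V →ₗ[ZMod 2] V) (hTa : ∀ x, Ta x = x + B x a • a) :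
    (LinearMap.ker (T - LinearMap.id) ≤ LinearMap.ker (Ta - LinearMap.id) →
      Module.finrank (ZMod 2) (LinearMap.ker (T ∘ₗ Ta - LinearMap.id)) =
        Module.finrank (ZMod 2) (LinearMap.ker (T - LinearMap.id)) + 1) ∧
    (¬ LinearMap.ker (T - LinearMap.id) ≤ LinearMap.ker (Ta - LinearMap.id) →
      Module.finrank (ZMod 2) (LinearMap.ker (T ∘ₗ Ta - LinearMap.id)) =
        Module.finrank (ZMod 2) (LinearMap.ker (T - LinearMap.id)) - 1) := by
  classical
  have two : ∀ c : ZMod 2, c + c = 0 := by decide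
  have one' : ∀ c : ZMod 2, c ≠ 0 → c = 1 := by decide
  have hsmul2 : ∀ v : V, v + v = 0 := by
    intro v
    have h : v + v = (2 : ZMod 2) • v := (two_smul _ v).symm
    rw [h, show (2 : ZMod 2) = 0 by decide, zero_smul]
  have hneg : ∀ v : V, -v = v := fun v => neg_eq_of_add_eq_zero_left (hsmul2 v)
  -- g 0 = 0
  have g0 : g 0 = 0 := by
    have h := hquad 0 0
    simp only [add_zero, map_zero, LinearMap.zero_apply] at h
    rw [two (g 0)] at h
    exact h
  -- B is alternating
  have Balt : ∀ x : V, B x x = 0 := by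
    intro x
    have h := hquad x x
    rw [hsmul2 x, g0, two (g x), zero_add] at h
    exact h.symm
  -- orthogonality of T for B
  have Borth : ∀ x y, B (T x) (T y) = B x y := by
    intro x y
    have h := hquad (T x) (T y)
    rw [← map_add T x y, hT, hT, hT, hquad x y] at h
    exact (add_left_cancel h).symm
  -- T injective and surjective
  have Tinj : Function.Injective T := by
    rw [← LinearMap.ker_eq_bot, LinearMap.ker_eq_bot']
    intro m hm
    by_contra hne
    obtain ⟨y, hy⟩ := hnd m hne
    apply hy
    rw [← Borth m y, hm]
    simp
  have Tsurj : Function.Surjective T := LinearMap.injective_iff_surjective.mp Tinj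
  have ha0 : a ≠ 0 := by
    intro h
    rw [h, g0] at hga
    exact absurd hga (by decide)
  set K := LinearMap.ker (T - LinearMap.id) with hK
  set K' := LinearMap.ker (T ∘ₗ Ta - LinearMap.id) with hK'
  set N := LinearMap.ker (Ta - LinearMap.id) with hNdef
  have memK : ∀ x, x ∈ K ↔ T x = x := by
    intro x
    rw [hK, LinearMap.mem_ker, LinearMap.sub_apply, LinearMap.id_apply, sub_eq_zero]
  have memK' : ∀ x, x ∈ K' ↔ T (Ta x) = x := by
    intro x
    rw [hK', LinearMap.mem_ker, LinearMap.sub_apply, LinearMap.id_apply, sub_eq_zero,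
      LinearMap.comp_apply]
  have hN : ∀ x, x ∈ N ↔ B x a = 0 := by
    intro x
    rw [hNdef, LinearMap.mem_ker, LinearMap.sub_apply, LinearMap.id_apply, hTa x,
      add_sub_cancel_left]
    constructor
    · intro h
      by_contra hc
      rw [one' _ hc, one_smul] at h
      exact ha0 h
    · intro h; rw [h, zero_smul]
  -- the key intersection identity
  have KN : K ⊓ N = K' ⊓ N := by
    ext x
    simp only [Submodule.mem_inf]
    constructor
    · rintro ⟨hxK, hxN⟩
      refine ⟨?_, hxN⟩
      rw [memK' x, hTa x, (hN x).mp hxN, zero_smul, add_zero]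
      exact (memK x).mp hxK
    · rintro ⟨hxK', hxN⟩
      refine ⟨?_, hxN⟩
      rw [memK x]
      have := (memK' x).mp hxK'
      rwa [hTa x, (hN x).mp hxN, zero_smul, add_zero] at this
  -- not both K and K' contain vectors outside N
  have hB2 : ∀ x ∈ K, ∀ y ∈ K', B x a ≠ 0 → B y a ≠ 0 → False := by
    intro x hx y hy hxa hya
    have hx' : T x = x := (memK x).mp hx
    have hy' : T (Ta y) = y := (memK' y).mp hy
    rw [hTa y, one' _ hya, one_smul, map_add] at hy'
    have hTy : T y = y - T a := by
      rw [eq_sub_iff_add_eq]; exact hy'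
    have h1 : B x (T a) = B x a := by
      conv_lhs => rw [← hx']
      exact Borth x a
    have h2 := Borth x y
    rw [hx', hTy, map_sub, sub_eq_self] at h2
    rw [h2] at h1
    exact hxa h1.symm
  -- nondegeneracy
  have hBnd : B.Nondegenerate := by
    refine ⟨?_, ?_⟩
    · intro m hm
      by_contra hc
      obtain ⟨y, hy⟩ := hnd m hc
      exact hy (hm y)
    · intro m hm
      by_contra hc
      obtain ⟨y, hy⟩ := hnd m hc
      apply hy
      have h1 := hquad m y
      have h2 := hquad y m
      rw [add_comm m y] at h1
      rw [h1, add_comm (g m) (g y)] at h2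
      rw [add_left_cancel h2]
      exact hm y
  -- Case 1 core: if K ≤ N then there is a fixed point of T∘Ta not in N
  have case1 : (∀ x ∈ K, B x a = 0) → ∃ x, x ∈ K' ∧ B x a ≠ 0 := by
    intro hle
    have hz : ∃ z, T z - z = a := by
      by_contra hcon
      push_neg at hcon
      set p := LinearMap.range (T - LinearMap.id) with hp
      have hap : a ∉ p := by
        intro hmem
        obtain ⟨z, hzz⟩ := hmem
        exact hcon z (by simpa using hzz)
      have ha' : p.mkQ a ≠ 0 := fun h => hap (by simpa [Submodule.Quotient.mk_eq_zero] using h)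
      have hex : ∃ f : Module.Dual (ZMod 2) (V ⧸ p), f (p.mkQ a) ≠ 0 := by
        by_contra hc
        push_neg at hc
        exact ha' ((Module.forall_dual_apply_eq_zero_iff (ZMod 2) (p.mkQ a)).mp hc)
      obtain ⟨f, hf⟩ := hex
      set F : V →ₗ[ZMod 2] ZMod 2 := f ∘ₗ p.mkQ with hF
      have hFS : ∀ x, F (T x - x) = 0 := by
        intro x
        have : T x - x ∈ p := ⟨x, by simp⟩
        simp only [hF, LinearMap.comp_apply, Submodule.mkQ_apply]
        rw [(Submodule.Quotient.mk_eq_zero p).mpr this, map_zero]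
      set y := (B.toDual hBnd).symm F with hy
      have hyB : ∀ x, B y x = F x := by
        intro x
        have : B.toDual hBnd y = F := (B.toDual hBnd).apply_symm_apply F
        calc B y x = B.toDual hBnd y x := rfl
          _ = F x := by rw [this]
      have hyT : ∀ x, B y (T x) = B y x := by
        intro x
        have h := hFS x
        rw [← hyB, map_sub, sub_eq_zero] at h
        rw [h, hyB]
      have hfix : T y = y := by
        have hall : ∀ v, B (T y - y) v = 0 := by
          intro v
          obtain ⟨x, rfl⟩ := Tsurj v
          rw [map_sub, LinearMap.sub_apply, Borth y x, hyT x, sub_self]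
        have := hBnd.1 (T y - y) hall
        rwa [sub_eq_zero] at this
      have hyK : y ∈ K := (memK y).mpr hfix
      have := hle y hyK
      rw [hyB a] at this
      exact hf (by simpa [hF] using this)
    obtain ⟨z, hz⟩ := hz
    have hza : T z + z = a := by
      rw [← hz, sub_eq_add_neg, hneg]
    have hBz : B (T z) z = 1 := by
      have h := hquad (T z) z
      rw [hza, hga, hT z, two (g z), zero_add] at h
      exact h.symm
    have hBxa : B (T z) a = 1 := by
      rw [← hza, map_add, Balt (T z), zero_add, hBz]
    refine ⟨T z, ?_, by rw [hBxa]; decide⟩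
    rw [memK' (T z), hTa (T z), hBxa, one_smul, ← hza]
    have : T z + (T z + z) = z := by
      rw [← add_assoc, hsmul2 (T z), zero_add]
    rw [this]
  -- B is symmetric
  have Bsym : ∀ x y, B x y = B y x := by
    intro x y
    have h1 := hquad x y
    have h2 := hquad y x
    rw [add_comm x y] at h1
    rw [h1, add_comm (g x) (g y)] at h2
    exact add_left_cancel h2
  -- rewriting N as kernel of a functional
  have hNφ : N = LinearMap.ker (B a) := by
    ext x
    rw [hN x, LinearMap.mem_ker, Bsym x a]
  constructor
  · -- case 1
    intro hle
    have hle' : ∀ x ∈ K, B x a = 0 := fun x hx => (hN x).mp (hle hx)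
    obtain ⟨x, hxK', hxa⟩ := case1 hle'
    have hKeq : K' ⊓ N = K := by
      rw [← KN]
      exact inf_eq_left.mpr hle
    have h := aux_rank6 K' (B a) x hxK' (by rwa [Bsym x a] at hxa)
    rw [← hNφ, hKeq] at h
    omega
  · -- case 2
    intro hnle
    obtain ⟨x, hxK, hxN⟩ := SetLike.not_le_iff_exists.mp hnle
    have hxa : B x a ≠ 0 := fun h => hxN ((hN x).mpr h)
    have hK'N : K' ≤ N := by
      by_contra h
      obtain ⟨y, hyK', hyN⟩ := SetLike.not_le_iff_exists.mp h
      exact hB2 x hxK y hyK' hxa (fun h => hyN ((hN y).mpr h))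
    have hKeq : K' = K ⊓ N := by
      rw [KN]
      exact (inf_eq_left.mpr hK'N).symm
    have h := aux_rank6 K (B a) x hxK (by rwa [Bsym x a] at hxa)
    rw [← hNφ, ← hKeq] at h
    omega
end

section
/- Let g be a non-degenerate quadratic form on a finite-dimensional Z/2-vector space V, T orthogonal with respect to g, and a ∈ V with g(a) = 1. Then F(T∘T_a) ⊄ F(T_a) if and only if F(T) ⊆ F(T_a), where T_a(x) = x + B(x,a)·a and F(S) is the fixed subspace of S. -/
theorem stmt7 {V : Type*} [AddCommGroup V] [Module (ZMod 2) V]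
    [FiniteDimensional (ZMod 2) V]
    (B : LinearMap.BilinForm (ZMod 2) V) (g : V → ZMod 2)
    (hquad : ∀ x y, g (x + y) = g x + g y + B x y)
    (hnd : ∀ x : V, x ≠ 0 → ∃ y, B x y ≠ 0)
    (T : V →ₗ[ZMod 2] V) (hT : ∀ x, g (T x) = g x)
    (a : V) (hga : g a = 1)
    (Ta : V →ₗ[ZMod 2] V) (hTa : ∀ x, Ta x = x + B x a • a) :
    ¬ LinearMap.ker (T ∘ₗ Ta - LinearMap.id) ≤ LinearMap.ker (Ta - LinearMap.id) ↔
      LinearMap.ker (T - LinearMap.id) ≤ LinearMap.ker (Ta - LinearMap.id) := by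
  have hone : ∀ c : ZMod 2, c ≠ 0 → c = 1 := by decide
  have h11 : (1 : ZMod 2) + 1 = 0 := by decide
  have haa : a + a = 0 := by
    have := two_smul (ZMod 2) a
    simpa [show ((2 : ZMod 2)) = 0 from rfl] using this.symm
  -- g 0 = 0
  have hg0 : g 0 = 0 := by simpa using hquad 0 0
  -- a ≠ 0
  have ha0 : a ≠ 0 := fun h => by rw [h, hg0] at hga; exact one_ne_zero hga.symm
  -- B a a = 0
  have hBaa : B a a = 0 := by
    have h := hquad a a
    rw [haa, hg0, hga, h11, zero_add] at h
    exact h.symm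
  -- B symmetric
  have hsymm : ∀ x y, B x y = B y x := by
    intro x y
    have h1 := hquad x y
    have h2 := hquad y x
    rw [add_comm y x] at h2
    rw [h2] at h1
    have h3 : g x + g y + B y x = g x + g y + B x y := by
      rw [add_comm (g y) (g x)] at h1; exact h1
    exact (add_left_cancel h3).symm
  -- membership in ker (Ta - id)
  have hker : ∀ x, x ∈ LinearMap.ker (Ta - LinearMap.id) ↔ B x a = 0 := by
    intro x
    rw [LinearMap.mem_ker, LinearMap.sub_apply, LinearMap.id_apply, hTa]
    constructor
    · intro h
      have h' : B x a • a = 0 := by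
        have : x + B x a • a - x = B x a • a := by abel
        rw [← this, h]
      rcases smul_eq_zero.mp h' with h'' | h''
      · exact h''
      · exact absurd h'' ha0
    · intro h; rw [h, zero_smul, add_zero, sub_self]
  -- B invariance
  have hBinv : ∀ x y, B (T x) (T y) = B x y := by
    intro x y
    have h1 := hquad (T x) (T y)
    have h2 := hquad x y
    rw [← map_add, hT, hT, hT, h2] at h1
    exact (add_left_cancel h1).symm
  -- T injective, surjective
  have hTinj : Function.Injective T := by
    rw [← LinearMap.ker_eq_bot, LinearMap.ker_eq_bot']
    intro m hm
    by_contra hm0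
    obtain ⟨y, hy⟩ := hnd m hm0
    apply hy
    rw [← hBinv m y, hm]
    simp
  have hTsurj : Function.Surjective T := (LinearMap.injective_iff_surjective).mp hTinj
  constructor
  · -- forward
    intro h z hz
    obtain ⟨x, hx, hx'⟩ := SetLike.not_le_iff_exists.mp h
    rw [LinearMap.mem_ker, LinearMap.sub_apply, LinearMap.comp_apply,
      LinearMap.id_apply, sub_eq_zero] at hx
    have hBxa : B x a = 1 := hone _ (fun h0 => hx' ((hker x).mpr h0))
    have hTax : Ta x = x + a := by rw [hTa, hBxa, one_smul]
    have hTxa : T (x + a) = x := by rw [← hTax]; exact hx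
    rw [LinearMap.mem_ker, LinearMap.sub_apply, LinearMap.id_apply, sub_eq_zero] at hz
    rw [hker]
    have h1 : B z (x + a) = B z x := by
      rw [← hBinv z (x + a), hz, hTxa]
    rw [map_add] at h1
    have h2 : B z x + B z a = B z x + 0 := by rw [add_zero]; exact h1
    exact add_left_cancel h2
  · -- backward
    intro hF
    have hnd' : B.Nondegenerate := by
      refine ⟨fun m hm => ?_, fun m hm => ?_⟩
      · by_contra hm0
        obtain ⟨y, hy⟩ := hnd m hm0
        exact hy (hm y)
      · by_contra hm0
        obtain ⟨y, hy⟩ := hnd m hm0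
        exact hy ((hsymm m y).trans (hm y))
    have hmem : a ∈ LinearMap.range (T - LinearMap.id) := by
      rw [← Subspace.forall_mem_dualAnnihilator_apply_eq_zero_iff]
      intro φ hφ
      set z := (B.toDual hnd').symm φ with hz
      have hφz : ∀ w, φ w = B z w := fun w =>
        (LinearMap.BilinForm.apply_toDual_symm_apply (hB := hnd') φ w).symm
      have hzero : ∀ w : V, φ ((T - LinearMap.id : V →ₗ[ZMod 2] V) w) = 0 := fun w =>
        (Submodule.mem_dualAnnihilator φ).mp hφ _ (LinearMap.mem_range_self _ w)
      have hkey : ∀ w, B (z - T z) w = 0 := by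
        intro w
        obtain ⟨u, rfl⟩ := hTsurj w
        have h0 := hzero u
        rw [hφz, LinearMap.sub_apply, LinearMap.id_apply, map_sub] at h0
        have h1 : B z (T u) = B z u := sub_eq_zero.mp h0
        rw [map_sub, LinearMap.sub_apply, hBinv, h1, sub_self]
      have hTz : T z = z := (sub_eq_zero.mp (hnd'.1 _ hkey)).symm
      have hBza : B z a = 0 := by
        have hz' : z ∈ LinearMap.ker (T - LinearMap.id) := by
          rw [LinearMap.mem_ker, LinearMap.sub_apply, LinearMap.id_apply, hTz, sub_self]
        exact (hker z).mp (hF hz')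
      rw [hφz, hBza]
    obtain ⟨y, hy⟩ := hmem
    rw [LinearMap.sub_apply, LinearMap.id_apply, sub_eq_iff_eq_add] at hy
    -- B y a = 1 from g invariance
    have hBya : B y a = 1 := by
      have h1 := hT y
      rw [hy, hquad, hga] at h1
      have h2 : g y + (1 + B a y) = g y + 0 := by rw [add_zero]; linear_combination h1
      have h3 : (1 : ZMod 2) + B a y = 0 := add_left_cancel h2
      have h4 : ∀ c : ZMod 2, 1 + c = 0 → c = 1 := by decide
      rw [hsymm y a]
      exact h4 _ h3
    -- witness x = y + a
    rw [SetLike.not_le_iff_exists]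
    have hBxa : B (y + a) a = 1 := by rw [map_add, LinearMap.add_apply, hBya, hBaa, add_zero]
    refine ⟨y + a, ?_, ?_⟩
    · rw [LinearMap.mem_ker, LinearMap.sub_apply, LinearMap.comp_apply,
        LinearMap.id_apply, sub_eq_zero, hTa, hBxa, one_smul, add_assoc, haa, add_zero, hy]
      exact add_comm a y
    · intro hmem'
      have h5 := (hker _).mp hmem'
      rw [hBxa] at h5
      exact one_ne_zero h5
end

section
/- Let g be a non-degenerate quadratic form on a finite-dimensional Z/2-vector space V. If T = T_{a_1} ∘ ⋯ ∘ T_{a_k} is a product of k transvections T_{a_i}(x) = x + B(x,a_i)·a_i with g(a_i) = 1, then rank(T − Id) ≡ k (mod 2). -/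
open Module LinearMap

section Aux

variable {V : Type*} [AddCommGroup V] [Module (ZMod 2) V]

/-- The transvection associated to `a`. -/
noncomputable def tvec (B : LinearMap.BilinForm (ZMod 2) V) (a : V) :
    Module.End (ZMod 2) V :=
  LinearMap.id + LinearMap.toSpanSingleton (ZMod 2) V a ∘ₗ (B.flip a)

lemma tvec_apply (B : LinearMap.BilinForm (ZMod 2) V) (a x : V) :
    tvec B a x = x + B x a • a := rfl

lemma char2_add_self (x : V) : x + x = 0 := by
  rw [← two_smul (ZMod 2) x, show (2 : ZMod 2) = 0 by decide, zero_smul]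

lemma char2_neg (x : V) : -x = x := by
  rw [neg_eq_iff_add_eq_zero, char2_add_self]

lemma zmod2_cases (c : ZMod 2) : c = 0 ∨ c = 1 := by revert c; decide

variable (B : LinearMap.BilinForm (ZMod 2) V) (g : V → ZMod 2)

section Quad
variable (hquad : ∀ x y, g (x + y) = g x + g y + B x y)
include hquad

lemma g_zero : g 0 = 0 := by
  have h := hquad 0 0
  simp only [add_zero, map_zero, LinearMap.zero_apply] at h
  exact h.trans (CharTwo.add_self_eq_zero _)

lemma B_symm (x y : V) : B x y = B y x := by
  have h1 := hquad x y
  have h2 := hquad y x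
  rw [add_comm y x] at h2
  have := h1.symm.trans h2
  have hx := CharTwo.add_self_eq_zero (g x)
  have hy := CharTwo.add_self_eq_zero (g y)
  linear_combination this

lemma B_self (x : V) : B x x = 0 := by
  have h := hquad x x
  rw [char2_add_self, g_zero B g hquad] at h
  have := CharTwo.add_self_eq_zero (g x)
  linear_combination -h - this

lemma B_eq (x y : V) : B x y = g (x + y) + g x + g y := by
  have h := hquad x y
  have hx := CharTwo.add_self_eq_zero (g x)
  have hy := CharTwo.add_self_eq_zero (g y)
  linear_combination -h - hx - hy

/-- transvections with `g a = 1` preserve `g`. -/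
lemma g_tvec (a : V) (hga : g a = 1) (x : V) : g (tvec B a x) = g x := by
  rw [tvec_apply, hquad]
  rcases zmod2_cases (B x a) with h | h
  · rw [h, zero_smul, g_zero B g hquad, map_zero, add_zero, add_zero]
  · rw [h, one_smul, hga, h]
    linear_combination CharTwo.add_self_eq_zero (1 : ZMod 2)

/-- a `g`-preserving map preserves `B`. -/
lemma B_invar (T : Module.End (ZMod 2) V) (hTg : ∀ x, g (T x) = g x) (x y : V) :
    B (T x) (T y) = B x y := by
  rw [B_eq B g hquad, B_eq B g hquad x y, ← map_add, hTg, hTg, hTg]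

end Quad

variable [FiniteDimensional (ZMod 2) V]

/-- Key lemma: multiplying a `g`-preserving endomorphism by a transvection flips the
parity of the rank of `T - 1`. -/
lemma key (hquad : ∀ x y, g (x + y) = g x + g y + B x y)
    (hnd : ∀ x : V, x ≠ 0 → ∃ y, B x y ≠ 0)
    (a : V) (hga : g a = 1)
    (T : Module.End (ZMod 2) V) (hTg : ∀ x, g (T x) = g x) :
    Module.finrank (ZMod 2) (LinearMap.range (tvec B a * T - 1)) % 2
      = (Module.finrank (ZMod 2) (LinearMap.range (T - 1)) + 1) % 2 := by
  have ha0 : a ≠ 0 := by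
    intro h
    rw [h, g_zero B g hquad] at hga
    exact absurd hga (by decide)
  set A : Module.End (ZMod 2) V := T - 1 with hA
  set S : Module.End (ZMod 2) V := tvec B a * T - 1 with hSdef
  have hAx : ∀ x, A x = T x - x := by intro x; simp [hA]
  have hTx : ∀ x, T x = x + A x := by
    intro x; rw [hAx]; abel
  have hS : ∀ x, S x = A x + B (T x) a • a := by
    intro x
    simp only [hSdef, LinearMap.sub_apply, Module.End.mul_apply, Module.End.one_apply,
      tvec_apply, hAx]
    abel
  have hBT := B_invar B g hquad T hTg
  have hrnA := LinearMap.finrank_range_add_finrank_ker A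
  have hrnS := LinearMap.finrank_range_add_finrank_ker S
  by_cases ha : a ∈ LinearMap.range A
  · -- a is in the move space: rank drops by 1
    obtain ⟨w, hw⟩ := ha
    have hBwa : B w a = 1 := by
      have h := hTg w
      rw [hTx w, hw, hquad, hga] at h
      rcases zmod2_cases (B w a) with h' | h'
      · rw [h', add_zero] at h
        exact absurd (by linear_combination h : (1 : ZMod 2) = 0) one_ne_zero
      · exact h'
    have hFker : ∀ f, A f = 0 → S f = 0 := by
      intro f hf
      have hTf : T f = f := by rw [hTx, hf, add_zero]
      have hBfa : B f a = 0 := by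
        rw [← hw, hAx, map_sub, ← hTf, hBT, hTf, sub_self]
      rw [hS, hf, hTf, hBfa, zero_smul, add_zero]
    have hwker : S w = 0 := by
      have hTw : T w = w + a := by rw [hTx, hw]
      rw [hS, hw, hTw, map_add, LinearMap.add_apply, B_self B g hquad, add_zero, hBwa, one_smul,
        char2_add_self]
    have hw0 : w ∉ LinearMap.ker A := by
      intro h
      rw [LinearMap.mem_ker.mp h] at hw
      exact ha0 hw.symm
    have hkerS : LinearMap.ker S = LinearMap.ker A ⊔ (ZMod 2) ∙ w := by
      apply le_antisymm
      · intro x hx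
        have hx' : A x = B (T x) a • a := by
          have h0 := LinearMap.mem_ker.mp hx
          rw [hS] at h0
          rw [← char2_neg (B (T x) a • a)]
          exact eq_neg_of_add_eq_zero_left h0
        set c := B (T x) a with hc
        have hmem : x + c • w ∈ LinearMap.ker A := by
          rw [LinearMap.mem_ker, map_add, map_smul, hw, hx', char2_add_self]
        have : x = (x + c • w) + c • w := by
          rw [add_assoc, ← two_smul (ZMod 2) (c • w), show (2 : ZMod 2) = 0 by decide,
            zero_smul, add_zero]
        rw [this]
        exact Submodule.add_mem_sup hmem
          (Submodule.smul_mem _ c (Submodule.mem_span_singleton_self w))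
      · apply sup_le
        · intro f hf
          exact LinearMap.mem_ker.mpr (hFker f (LinearMap.mem_ker.mp hf))
        · rw [Submodule.span_singleton_le_iff_mem]
          exact LinearMap.mem_ker.mpr hwker
    have hdim : Module.finrank (ZMod 2) (LinearMap.ker S)
        = Module.finrank (ZMod 2) (LinearMap.ker A) + 1 := by
      rw [hkerS]
      have hinf : LinearMap.ker A ⊓ ((ZMod 2) ∙ w) = ⊥ := by
        rw [eq_bot_iff]
        rintro x ⟨hx1, hx2⟩
        obtain ⟨c, rfl⟩ := Submodule.mem_span_singleton.mp hx2
        rcases zmod2_cases c with h | h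
        · rw [h, zero_smul]; exact Submodule.zero_mem _
        · rw [h, one_smul] at hx1 ⊢
          exact absurd hx1 hw0
      have := Submodule.finrank_sup_add_finrank_inf_eq (LinearMap.ker A) ((ZMod 2) ∙ w)
      rw [hinf, finrank_bot, add_zero, finrank_span_singleton (by
        intro h; rw [h] at hw0; exact hw0 (Submodule.zero_mem _))] at this
      omega
    omega
  · -- a is not in the move space: rank goes up by 1
    have hBnd : B.Nondegenerate := by
      refine (LinearMap.IsRefl.nondegenerate_iff_separatingLeft
        (fun x y h => by rw [B_symm B g hquad]; exact h)).mpr ?_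
      intro x hx
      by_contra h
      obtain ⟨y, hy⟩ := hnd x h
      exact hy (hx y)
    have hBrefl : B.IsRefl := by
      intro x y h
      rw [B_symm B g hquad]; exact h
    -- the kernel of S is strictly inside ker A
    have hkle : LinearMap.ker S ≤ LinearMap.ker A := by
      intro x hx
      have hx' : A x = B (T x) a • a := by
        have h0 := LinearMap.mem_ker.mp hx
        rw [hS] at h0
        rw [← char2_neg (B (T x) a • a)]
        exact eq_neg_of_add_eq_zero_left h0
      rcases zmod2_cases (B (T x) a) with h | h
      · rw [LinearMap.mem_ker, hx', h, zero_smul]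
      · exfalso
        exact ha ⟨x, by rw [hx', h, one_smul]⟩
    -- find f in ker A with B f a ≠ 0
    have hex : ∃ f, A f = 0 ∧ B f a = 1 := by
      by_contra h
      push_neg at h
      have haorth : a ∈ B.orthogonal (LinearMap.ker A) := by
        rw [LinearMap.BilinForm.mem_orthogonal_iff]
        intro f hf
        rcases zmod2_cases (B f a) with h' | h'
        · exact h'
        · exact absurd h' (h f (LinearMap.mem_ker.mp hf))
      have hle : LinearMap.range A ≤ B.orthogonal (LinearMap.ker A) := by
        rintro _ ⟨x, rfl⟩
        rw [LinearMap.BilinForm.mem_orthogonal_iff]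
        intro f hf
        have hTf : T f = f := by rw [hTx, LinearMap.mem_ker.mp hf, add_zero]
        rw [hAx, map_sub, ← hTf, hBT, hTf, sub_self]
      have heq : LinearMap.range A = B.orthogonal (LinearMap.ker A) := by
        apply Submodule.eq_of_le_of_finrank_le hle
        rw [LinearMap.BilinForm.finrank_orthogonal hBnd]
        omega
      rw [← heq] at haorth
      exact ha haorth
    obtain ⟨f, hf0, hfa⟩ := hex
    have hflt : LinearMap.ker S < LinearMap.ker A := by
      apply lt_of_le_of_ne hkle
      intro h
      have : f ∈ LinearMap.ker S := by rw [h]; exact LinearMap.mem_ker.mpr hf0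
      have hSf : S f = 0 := LinearMap.mem_ker.mp this
      have hTf : T f = f := by rw [hTx, hf0, add_zero]
      rw [hS, hf0, hTf, hfa, one_smul, zero_add] at hSf
      exact ha0 hSf
    have hklt : Module.finrank (ZMod 2) (LinearMap.ker S)
        < Module.finrank (ZMod 2) (LinearMap.ker A) :=
      Submodule.finrank_lt_finrank_of_lt hflt
    -- upper bound for the range
    have hrle : LinearMap.range S ≤ LinearMap.range A ⊔ ((ZMod 2) ∙ a) := by
      rintro _ ⟨x, rfl⟩
      rw [hS]
      exact Submodule.add_mem_sup (LinearMap.mem_range_self A x)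
        (Submodule.smul_mem _ _ (Submodule.mem_span_singleton_self a))
    have hrub : Module.finrank (ZMod 2) (LinearMap.range S)
        ≤ Module.finrank (ZMod 2) (LinearMap.range A) + 1 := by
      have h1 := Submodule.finrank_mono hrle
      have h2 := Submodule.finrank_sup_add_finrank_inf_eq (LinearMap.range A) ((ZMod 2) ∙ a)
      have h3 : Module.finrank (ZMod 2) ((ZMod 2) ∙ a) = 1 := finrank_span_singleton ha0
      omega
    omega

/-- a product of `g`-preserving maps preserves `g`. -/
lemma g_prod (l : List V) (hl : ∀ v ∈ l, g v = 1)
    (hquad : ∀ x y, g (x + y) = g x + g y + B x y) (x : V) :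
    g ((l.map (tvec B)).prod x) = g x := by
  induction l generalizing x with
  | nil => simp
  | cons a t ih =>
    rw [List.map_cons, List.prod_cons, Module.End.mul_apply]
    rw [g_tvec B g hquad a (hl a List.mem_cons_self)]
    exact ih (fun v hv => hl v (List.mem_cons_of_mem a hv)) x

lemma parity (hquad : ∀ x y, g (x + y) = g x + g y + B x y)
    (hnd : ∀ x : V, x ≠ 0 → ∃ y, B x y ≠ 0)
    (l : List V) (hl : ∀ v ∈ l, g v = 1) :
    Module.finrank (ZMod 2) (LinearMap.range ((l.map (tvec B)).prod - 1)) % 2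
      = l.length % 2 := by
  induction l with
  | nil =>
    rw [List.map_nil, List.prod_nil, sub_self, LinearMap.range_zero]
    simp
  | cons a t ih =>
    rw [List.map_cons, List.prod_cons]
    have hkey := key B g hquad hnd a (hl a List.mem_cons_self)
      ((t.map (tvec B)).prod)
      (g_prod B g t (fun v hv => hl v (List.mem_cons_of_mem a hv)) hquad)
    rw [hkey]
    have := ih (fun v hv => hl v (List.mem_cons_of_mem a hv))
    rw [List.length_cons]
    omega

end Aux

theorem stmt8 {V : Type*} [AddCommGroup V] [Module (ZMod 2) V]
    [FiniteDimensional (ZMod 2) V]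
    (B : LinearMap.BilinForm (ZMod 2) V) (g : V → ZMod 2)
    (hquad : ∀ x y, g (x + y) = g x + g y + B x y)
    (hnd : ∀ x : V, x ≠ 0 → ∃ y, B x y ≠ 0)
    (k : ℕ) (a : Fin k → V) (hga : ∀ i, g (a i) = 1)
    (Ta : Fin k → Module.End (ZMod 2) V)
    (hTa : ∀ i x, Ta i x = x + B x (a i) • a i)
    (T : Module.End (ZMod 2) V) (hT : T = (List.ofFn Ta).prod) :
    Module.finrank (ZMod 2) (LinearMap.range (T - 1)) % 2 = k % 2 := by
  have hTa' : Ta = fun i => tvec B (a i) := by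
    funext i
    exact LinearMap.ext fun x => by rw [hTa, tvec_apply]
  have hofn : List.ofFn Ta = (List.ofFn a).map (tvec B) := by
    rw [hTa', List.map_ofFn]
    rfl
  have hl : ∀ v ∈ List.ofFn a, g v = 1 := by
    intro v hv
    obtain ⟨i, rfl⟩ := List.mem_ofFn.mp hv
    exact hga i
  have := parity B g hquad hnd (List.ofFn a) hl
  rw [hT, hofn]
  rw [this, List.length_ofFn]
end

section
/- Let g be a non-degenerate quadratic form on a finite-dimensional Z/2-vector space V. The map ψ: O(V,g) → Z/2 defined by ψ(T) = rank(T − Id) mod 2 is a group homomorphism from the orthogonal group of (V,g) to Z/2. -/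
open Module Submodule LinearMap

universe u

/-- A nondegenerate alternating bilinear form over `ZMod 2` lives on an even-dimensional space. -/
theorem alt_nondeg_even (n : ℕ) : ∀ (V : Type u) [AddCommGroup V] [Module (ZMod 2) V]
    [FiniteDimensional (ZMod 2) V] (B : LinearMap.BilinForm (ZMod 2) V),
    finrank (ZMod 2) V = n → (∀ x, B x x = 0) → B.Nondegenerate → Even n := by
  induction n using Nat.strong_induction_on with
  | _ n ih =>
    intro V _ _ _ B hn halt hnd
    rcases Nat.eq_zero_or_pos n with h0 | hpos
    · simp [h0]
    have hz : ∀ c d : ZMod 2, c + d = 0 → c = d := by decide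
    have hsymm : ∀ a b : V, B a b = B b a := by
      intro a b
      have h := halt (a + b)
      simp only [map_add, LinearMap.add_apply, halt] at h
      exact hz _ _ (by linear_combination h)
    have hrefl : B.IsRefl := fun a b h => (hsymm b a).trans h
    have : Nontrivial V := by
      rw [← finrank_pos_iff (R := ZMod 2)]; omega
    obtain ⟨x, hx⟩ := exists_ne (0 : V)
    have hex : ∃ y, B x y ≠ 0 := by
      by_contra h
      push_neg at h
      exact hx (hnd.1 x (by intro m; exact h m))
    obtain ⟨y, hBxy⟩ := hex
    have hy : y ≠ 0 := fun h => hBxy (by rw [h]; simp)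
    have li : LinearIndependent (ZMod 2) ![x, y] := by
      rw [LinearIndependent.pair_iff]
      intro s t hst
      have h1 : B x (s • x + t • y) = 0 := by rw [hst]; simp
      simp only [map_add, map_smul, smul_eq_mul, halt, mul_zero, zero_add] at h1
      have ht : t = 0 := by
        rcases mul_eq_zero.mp h1 with h | h
        · exact h
        · exact absurd h hBxy
      subst ht
      simp only [zero_smul, add_zero, smul_eq_zero] at hst
      rcases hst with h | h
      · exact ⟨h, rfl⟩
      · exact absurd h hx
    set W : Submodule (ZMod 2) V := Submodule.span (ZMod 2) (Set.range ![x, y]) with hW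
    have hxW : x ∈ W := Submodule.subset_span ⟨0, rfl⟩
    have hyW : y ∈ W := Submodule.subset_span ⟨1, rfl⟩
    have hW2 : finrank (ZMod 2) W = 2 := by
      rw [hW, finrank_span_eq_card li]
      simp
    have hres : (B.restrict W).Nondegenerate := by
      refine (LinearMap.IsRefl.nondegenerate_iff_separatingLeft (B := B.restrict W)
        (fun a b h => hrefl a b h)).mpr ?_
      rintro ⟨v, hv⟩ h
      have hvx : B v x = 0 := h ⟨x, hxW⟩
      have hvy : B v y = 0 := h ⟨y, hyW⟩
      have hvW : v ∈ Submodule.span (ZMod 2) {x, y} := by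
        rwa [show ({x, y} : Set V) = Set.range ![x, y] by
          ext z; simp [Fin.exists_fin_two, or_comm]]
      obtain ⟨a, b, hab⟩ := Submodule.mem_span_pair.mp hvW
      have h1 : B (a • x + b • y) y = 0 := by rw [hab]; exact hvy
      have h2 : B (a • x + b • y) x = 0 := by rw [hab]; exact hvx
      simp only [map_add, map_smul, LinearMap.add_apply, LinearMap.smul_apply,
        smul_eq_mul, halt, mul_zero, zero_add, add_zero] at h1 h2
      have ha : a = 0 := by
        rcases mul_eq_zero.mp h1 with h | h
        · exact h
        · exact absurd h hBxy
      have hb : b = 0 := by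
        rw [hsymm y x] at h2
        rcases mul_eq_zero.mp h2 with h | h
        · exact h
        · exact absurd h hBxy
      apply Subtype.ext
      simp [← hab, ha, hb]
    have hcompl : IsCompl W (B.orthogonal W) :=
      (LinearMap.BilinForm.restrict_nondegenerate_iff_isCompl_orthogonal hrefl).mp hres
    have hsplit : finrank (ZMod 2) W + finrank (ZMod 2) (B.orthogonal W) = n := by
      rw [← hn]
      exact Submodule.finrank_add_eq_of_isCompl hcompl
    set m := finrank (ZMod 2) (B.orthogonal W) with hm
    have hres' : (B.restrict (B.orthogonal W)).Nondegenerate := by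
      refine (LinearMap.IsRefl.nondegenerate_iff_separatingLeft
        (B := B.restrict (B.orthogonal W)) (fun a b h => hrefl a b h)).mpr ?_
      rintro ⟨v, hv⟩ h
      apply Subtype.ext
      show v = (0 : V)
      apply hnd.1
      intro u
      have hu : u ∈ W ⊔ B.orthogonal W := by rw [hcompl.codisjoint.eq_top]; trivial
      obtain ⟨a, ha, c, hc, rfl⟩ := Submodule.mem_sup.mp hu
      have h1 : B v a = 0 := (hsymm v a).trans (hv a ha)
      have h2 : B v c = 0 := h ⟨c, hc⟩
      simp [h1, h2]
    have heven : Even m := ih m (by omega) (B.orthogonal W) (B.restrict (B.orthogonal W)) rfl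
      (fun z => halt z.1) hres'
    obtain ⟨k, hk⟩ := heven
    exact ⟨k + 1, by omega⟩

/-- Parity of the radical of an alternating form over `ZMod 2`. -/
theorem alt_radical_parity (M : Type u) [AddCommGroup M] [Module (ZMod 2) M]
    [FiniteDimensional (ZMod 2) M] (Bm : LinearMap.BilinForm (ZMod 2) M)
    (halt : ∀ x, Bm x x = 0) :
    ∃ k, finrank (ZMod 2) M = finrank (ZMod 2) (LinearMap.ker Bm) + 2 * k := by
  have hz : ∀ c d : ZMod 2, c + d = 0 → c = d := by decide
  have hsymm : ∀ a b : M, Bm a b = Bm b a := by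
    intro a b
    have h := halt (a + b)
    simp only [map_add, LinearMap.add_apply, halt] at h
    exact hz _ _ (by linear_combination h)
  obtain ⟨C, hC⟩ := Submodule.exists_isCompl (LinearMap.ker Bm)
  have hdim := Submodule.finrank_add_eq_of_isCompl hC
  have hndC : (Bm.restrict C).Nondegenerate := by
    refine (LinearMap.IsRefl.nondegenerate_iff_separatingLeft (B := Bm.restrict C)
      (fun a b h => (hsymm b a).trans h)).mpr ?_
    rintro ⟨v, hv⟩ h
    have hvker : v ∈ LinearMap.ker Bm := by
      rw [LinearMap.mem_ker]
      ext u
      have hu : u ∈ LinearMap.ker Bm ⊔ C := by rw [hC.codisjoint.eq_top]; trivial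
      obtain ⟨a, ha, c, hc, rfl⟩ := Submodule.mem_sup.mp hu
      have h1 : Bm v a = 0 := by
        rw [hsymm]
        rw [LinearMap.mem_ker] at ha
        rw [ha]
        rfl
      have h2 : Bm v c = 0 := h ⟨c, hc⟩
      simp [h1, h2]
    have hv0 : v ∈ LinearMap.ker Bm ⊓ C := ⟨hvker, hv⟩
    rw [hC.disjoint.eq_bot] at hv0
    exact Subtype.ext hv0
  have heven : Even (finrank (ZMod 2) C) :=
    alt_nondeg_even _ C (Bm.restrict C) rfl (fun z => halt z.1) hndC
  obtain ⟨k, hk⟩ := heven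
  exact ⟨k, by omega⟩

set_option maxHeartbeats 1000000 in
theorem stmt9 {V : Type*} [AddCommGroup V] [Module (ZMod 2) V]
    [FiniteDimensional (ZMod 2) V]
    (B : LinearMap.BilinForm (ZMod 2) V) (g : V → ZMod 2)
    (hquad : ∀ x y, g (x + y) = g x + g y + B x y)
    (hnd : ∀ x : V, x ≠ 0 → ∃ y, B x y ≠ 0)
    (T S : Module.End (ZMod 2) V)
    (hTb : Function.Bijective T) (hSb : Function.Bijective S)
    (hTg : ∀ x, g (T x) = g x) (hSg : ∀ x, g (S x) = g x) :
    ((Module.finrank (ZMod 2) (LinearMap.range (T * S - 1)) : ZMod 2)) =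
      (Module.finrank (ZMod 2) (LinearMap.range (T - 1)) : ZMod 2) +
      (Module.finrank (ZMod 2) (LinearMap.range (S - 1)) : ZMod 2) := by
  classical
  -- characteristic two helpers
  have hz : ∀ c d : ZMod 2, c + d = 0 → c = d := by decide
  have hzc : ∀ c : ZMod 2, c + c = 0 := by decide
  have habb : ∀ a : V, a + a = 0 := by
    intro a
    rw [← two_smul (ZMod 2) a, show (2 : ZMod 2) = 0 by decide, zero_smul]
  have hneg : ∀ a : V, -a = a := by
    intro a; rw [neg_eq_iff_add_eq_zero]; exact habb a
  have hsubV : ∀ a b : V, a - b = a + b := by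
    intro a b; rw [sub_eq_add_neg, hneg]
  have heq : ∀ {s t : V}, s + t = 0 → s = t := by
    intro s t h
    have : s + t + t = t := by rw [h, zero_add]
    rwa [add_assoc, habb, add_zero] at this
  have hflip : ∀ {s t w : V}, s + t = w → s = w + t := by
    intro s t w h
    apply heq
    rw [← h]
    calc s + (s + t + t) = (s + s) + (t + t) := by abel
    _ = 0 := by rw [habb, habb, add_zero]
  -- applications of `A - 1`
  have hE1 : ∀ (A : Module.End (ZMod 2) V) (x : V), (A - 1) x = A x + x := by
    intro A x
    rw [LinearMap.sub_apply, Module.End.one_apply, hsubV]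
  -- basic facts about g and B
  have hg0 : g 0 = 0 := by
    have h := hquad 0 0
    simp only [add_zero, map_zero, LinearMap.zero_apply] at h
    rw [hzc] at h
    exact h
  have halt : ∀ x : V, B x x = 0 := by
    intro x
    have h := hquad x x
    rw [habb x, hg0, hzc, zero_add] at h
    exact h.symm
  have hsymm : ∀ a b : V, B a b = B b a := by
    intro a b
    have h1 := hquad a b
    have h2 := hquad b a
    rw [add_comm b a] at h2
    linear_combination h2 - h1
  have hrefl : B.IsRefl := fun a b h => (hsymm b a).trans h
  have hndB : B.Nondegenerate := by
    refine (LinearMap.IsRefl.nondegenerate_iff_separatingLeft hrefl).mpr ?_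
    intro x hx
    by_contra h
    obtain ⟨y, hy⟩ := hnd x h
    exact hy (hx y)
  -- invariance of B under orthogonal maps
  have hBinv : ∀ (E : Module.End (ZMod 2) V), (∀ x, g (E x) = g x) →
      ∀ x y, B (E x) (E y) = B x y := by
    intro E hEg x y
    have h1 := hquad (E x) (E y)
    rw [← map_add, hEg, hEg, hEg] at h1
    linear_combination hquad x y - h1
  -- fixed space = orthogonal of the residual space
  have hker_orth : ∀ (E : Module.End (ZMod 2) V), Function.Surjective E →
      (∀ x y, B (E x) (E y) = B x y) →
      LinearMap.ker (E - 1) = B.orthogonal (LinearMap.range (E - 1)) := by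
    intro E hEs hEB
    have hkey : ∀ x y, B ((E - 1) x) y = B (E x) ((E - 1) y) := by
      intro x y
      rw [hE1, hE1]
      simp only [map_add, LinearMap.add_apply]
      rw [← hEB x y]
      ring
    ext y
    simp only [LinearMap.BilinForm.mem_orthogonal_iff, LinearMap.BilinForm.isOrtho_def,
      LinearMap.mem_ker]
    constructor
    · intro hy u hu
      obtain ⟨x, rfl⟩ := LinearMap.mem_range.mp hu
      rw [hkey, hy, map_zero]
    · intro h
      apply hndB.1
      intro z
      obtain ⟨w, rfl⟩ := hEs z
      rw [hsymm, ← hkey]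
      exact h _ (LinearMap.mem_range.mpr ⟨w, rfl⟩)
  -- membership in kernels
  have hker1 : ∀ (A : Module.End (ZMod 2) V) (x : V),
      x ∈ LinearMap.ker (A - 1) ↔ A x = x := by
    intro A x
    rw [LinearMap.mem_ker, hE1]
    constructor
    · intro h; exact heq h
    · intro h; rw [h]; exact habb x
  have happly : ∀ (A : Module.End (ZMod 2) V) (x v : V), (A - 1) x = v → A x = x + v := by
    intro A x v h
    rw [hE1] at h
    exact (hflip h).trans (add_comm v x)
  -- invariance instances
  have hBT := hBinv T hTg
  have hBS := hBinv S hSg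
  have horthT : LinearMap.ker (T - 1) = B.orthogonal (LinearMap.range (T - 1)) :=
    hker_orth T hTb.surjective hBT
  have horthS : LinearMap.ker (S - 1) = B.orthogonal (LinearMap.range (S - 1)) :=
    hker_orth S hSb.surjective hBS
  -- dimension of orthogonal complements
  have horthdim : ∀ N : Submodule (ZMod 2) V,
      finrank (ZMod 2) N + finrank (ZMod 2) (B.orthogonal N) = finrank (ZMod 2) V := by
    intro N
    have h := LinearMap.BilinForm.finrank_add_finrank_orthogonal (B := B) hrefl N
    rwa [B.orthogonal_top_eq_bot hndB, inf_bot_eq, finrank_bot, add_zero] at h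
  have horth_inf : ∀ N L : Submodule (ZMod 2) V,
      B.orthogonal (N ⊔ L) = B.orthogonal N ⊓ B.orthogonal L := by
    intro N L
    apply le_antisymm
    · exact le_inf (LinearMap.BilinForm.orthogonal_le le_sup_left)
        (LinearMap.BilinForm.orthogonal_le le_sup_right)
    · rintro m ⟨hm1, hm2⟩ u hu
      obtain ⟨a, ha, c, hc, rfl⟩ := Submodule.mem_sup.mp hu
      have h1 : B a m = 0 := hm1 a ha
      have h2 : B c m = 0 := hm2 c hc
      show B (a + c) m = 0
      simp [h1, h2]
  have hsup_orth : B.orthogonal (LinearMap.range (T - 1) ⊓ LinearMap.range (S - 1)) =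
      B.orthogonal (LinearMap.range (T - 1)) ⊔ B.orthogonal (LinearMap.range (S - 1)) := by
    have hle : B.orthogonal (LinearMap.range (T - 1)) ⊔ B.orthogonal (LinearMap.range (S - 1)) ≤
        B.orthogonal (LinearMap.range (T - 1) ⊓ LinearMap.range (S - 1)) :=
      sup_le (LinearMap.BilinForm.orthogonal_le inf_le_left)
        (LinearMap.BilinForm.orthogonal_le inf_le_right)
    refine (Submodule.eq_of_le_of_finrank_le hle ?_).symm
    have a1 := Submodule.finrank_sup_add_finrank_inf_eq
      (B.orthogonal (LinearMap.range (T - 1))) (B.orthogonal (LinearMap.range (S - 1)))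
    have a2 := horth_inf (LinearMap.range (T - 1)) (LinearMap.range (S - 1))
    have a3 := horthdim (LinearMap.range (T - 1))
    have a4 := horthdim (LinearMap.range (S - 1))
    have a5 := horthdim (LinearMap.range (T - 1) ⊔ LinearMap.range (S - 1))
    have a6 := horthdim (LinearMap.range (T - 1) ⊓ LinearMap.range (S - 1))
    have a7 := Submodule.finrank_sup_add_finrank_inf_eq
      (LinearMap.range (T - 1)) (LinearMap.range (S - 1))
    rw [← a2] at a1
    omega
  -- fixed vectors are orthogonal to the residual space
  have hfixT : ∀ f : V, (T - 1) f = 0 → ∀ w ∈ LinearMap.range (T - 1), B f w = 0 := by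
    intro f hf w hw
    have hmem : f ∈ B.orthogonal (LinearMap.range (T - 1)) :=
      horthT ▸ LinearMap.mem_ker.mpr hf
    exact (hsymm f w).trans (hmem w hw)
  have hfixS : ∀ f : V, (S - 1) f = 0 → ∀ w ∈ LinearMap.range (S - 1), B f w = 0 := by
    intro f hf w hw
    have hmem : f ∈ B.orthogonal (LinearMap.range (S - 1)) :=
      horthS ▸ LinearMap.mem_ker.mpr hf
    exact (hsymm f w).trans (hmem w hw)
  -- linear sections of T - 1 and S - 1 onto their ranges
  obtain ⟨σT, hσT⟩ := (T - 1).rangeRestrict.exists_rightInverse_of_surjective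
    (LinearMap.range_eq_top.mpr (T - 1).surjective_rangeRestrict)
  obtain ⟨σS, hσS⟩ := (S - 1).rangeRestrict.exists_rightInverse_of_surjective
    (LinearMap.range_eq_top.mpr (S - 1).surjective_rangeRestrict)
  have hσT' : ∀ (v : V) (hv : v ∈ LinearMap.range (T - 1)), (T - 1) (σT ⟨v, hv⟩) = v := by
    intro v hv
    have h := LinearMap.ext_iff.mp hσT ⟨v, hv⟩
    have h2 := congrArg Subtype.val h
    simpa using h2
  have hσS' : ∀ (v : V) (hv : v ∈ LinearMap.range (S - 1)), (S - 1) (σS ⟨v, hv⟩) = v := by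
    intro v hv
    have h := LinearMap.ext_iff.mp hσS ⟨v, hv⟩
    have h2 := congrArg Subtype.val h
    simpa using h2
  -- the bilinear form θ on M = range (T-1) ⊓ range (S-1)
  set M : Submodule (ZMod 2) V := LinearMap.range (T - 1) ⊓ LinearMap.range (S - 1) with hMdef
  have hMU : ∀ v : V, v ∈ M → v ∈ LinearMap.range (T - 1) := fun v hv => hv.1
  have hMW : ∀ v : V, v ∈ M → v ∈ LinearMap.range (S - 1) := fun v hv => hv.2
  set L : ↥M →ₗ[ZMod 2] V :=
    (σS.comp (Submodule.inclusion inf_le_right)) +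
      (σT.comp (Submodule.inclusion inf_le_left)) + M.subtype with hLdef
  set θ : LinearMap.BilinForm (ZMod 2) ↥M := B.comp L M.subtype with hθdef
  have hθapply : ∀ (v : V) (hv : v ∈ M) (z : ↥M),
      θ ⟨v, hv⟩ z = B (σS ⟨v, hv.2⟩ + σT ⟨v, hv.1⟩ + v) ↑z := by
    intro v hv z
    rfl
  -- θ is alternating
  have hBfix : ∀ (E : Module.End (ZMod 2) V), (∀ x, g (E x) = g x) → ∀ (a v : V),
      (E - 1) a = v → B a v = g v := by
    intro E hEg a v hav
    have hEa : E a = a + v := happly E a v hav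
    have h1 := hEg a
    rw [hEa, hquad a v] at h1
    have h2 : g v + B a v = 0 := by linear_combination h1
    exact (hz _ _ h2).symm
  have hθalt : ∀ v : ↥M, θ v v = 0 := by
    rintro ⟨v, hv⟩
    have h1 : B (σS ⟨v, hv.2⟩) v = g v := hBfix S hSg _ _ (hσS' v hv.2)
    have h2 : B (σT ⟨v, hv.1⟩) v = g v := hBfix T hTg _ _ (hσT' v hv.1)
    have h3 : B v v = 0 := halt v
    rw [hθapply v hv ⟨v, hv⟩]
    simp only [map_add, LinearMap.add_apply, h1, h2, h3, add_zero]
    exact hzc _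
  -- the key identification of the image of the fixed-space comparison map
  set p : ↥(LinearMap.ker (T * S - 1)) →ₗ[ZMod 2] V :=
    (S - 1) ∘ₗ (LinearMap.ker (T * S - 1)).subtype with hpdef
  have hZ : LinearMap.range p = Submodule.map M.subtype (LinearMap.ker θ) := by
    apply le_antisymm
    · rintro w hw
      obtain ⟨⟨x, hx⟩, rfl⟩ := LinearMap.mem_range.mp hw
      have hpx : p ⟨x, hx⟩ = (S - 1) x := rfl
      rw [hpx]
      have hRx : T (S x) = x := by
        have h := (hker1 (T * S) x).mp hx
        rwa [Module.End.mul_apply] at h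
      have hTSx : (T - 1) (S x) = (S - 1) x := by
        rw [hE1, hRx, hE1, add_comm]
      have hvW : (S - 1) x ∈ LinearMap.range (S - 1) := ⟨x, rfl⟩
      have hvU : (S - 1) x ∈ LinearMap.range (T - 1) := ⟨S x, hTSx⟩
      have hvM : (S - 1) x ∈ M := ⟨hvU, hvW⟩
      refine Submodule.mem_map.mpr ⟨⟨(S - 1) x, hvM⟩, ?_, rfl⟩
      rw [LinearMap.mem_ker]
      ext z
      rw [hθapply _ hvM z, LinearMap.zero_apply]
      set a := σS ⟨(S - 1) x, hvM.2⟩ with hadef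
      set b := σT ⟨(S - 1) x, hvM.1⟩ with hbdef
      have ha : (S - 1) a = (S - 1) x := hσS' _ hvM.2
      have hb : (T - 1) b = (S - 1) x := hσT' _ hvM.1
      have hfS : (S - 1) (a + x) = 0 := by
        rw [map_add, ha, hE1, habb]
      have hfT : (T - 1) (b + S x) = 0 := by
        rw [map_add, hb, hTSx, habb]
      have hsplit : a + b + (S - 1) x = (a + x) + (b + S x) := by
        rw [hE1 S x]
        abel
      rw [hsplit, map_add, LinearMap.add_apply]
      have hz1 : B (a + x) ↑z = 0 := hfixS _ hfS _ z.2.2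
      have hz2 : B (b + S x) ↑z = 0 := hfixT _ hfT _ z.2.1
      rw [hz1, hz2, add_zero]
    · rintro w hw
      obtain ⟨⟨v, hv⟩, hker, rfl⟩ := Submodule.mem_map.mp hw
      have ha : (S - 1) (σS ⟨v, hv.2⟩) = v := hσS' v hv.2
      have hb : (T - 1) (σT ⟨v, hv.1⟩) = v := hσT' v hv.1
      have hu : σS ⟨v, hv.2⟩ + σT ⟨v, hv.1⟩ + v ∈ B.orthogonal M := by
        intro z hzM
        have h0 : θ ⟨v, hv⟩ ⟨z, hzM⟩ = 0 := by
          rw [LinearMap.mem_ker.mp hker]; rfl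
        rw [hθapply v hv ⟨z, hzM⟩] at h0
        exact (hsymm z _).trans h0
      rw [hMdef, hsup_orth, ← horthT, ← horthS] at hu
      obtain ⟨c, hc, d, hd, hcd⟩ := Submodule.mem_sup.mp hu
      have hxS : (S - 1) (σS ⟨v, hv.2⟩ + d) = v := by
        rw [map_add, ha, LinearMap.mem_ker.mp hd, add_zero]
      have hSx : S (σS ⟨v, hv.2⟩ + d) = (σS ⟨v, hv.2⟩ + d) + v :=
        happly S _ v hxS
      have hxv : (σS ⟨v, hv.2⟩ + d) + v = σT ⟨v, hv.1⟩ + c := by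
        apply heq
        have h1 : (σS ⟨v, hv.2⟩ + σT ⟨v, hv.1⟩ + v) + (c + d) = 0 := by
          rw [hcd]; exact habb _
        calc (σS ⟨v, hv.2⟩ + d + v) + (σT ⟨v, hv.1⟩ + c)
            = (σS ⟨v, hv.2⟩ + σT ⟨v, hv.1⟩ + v) + (c + d) := by abel
        _ = 0 := h1
      have hTxv : T ((σS ⟨v, hv.2⟩ + d) + v) = σS ⟨v, hv.2⟩ + d := by
        have h2 : (T - 1) ((σS ⟨v, hv.2⟩ + d) + v) = v := by
          rw [hxv, map_add, hb, LinearMap.mem_ker.mp hc, add_zero]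
        have h3 := happly T _ v h2
        rw [h3, add_assoc, habb, add_zero]
      have hmem : σS ⟨v, hv.2⟩ + d ∈ LinearMap.ker (T * S - 1) := by
        rw [hker1, Module.End.mul_apply, hSx, hTxv]
      exact ⟨⟨_, hmem⟩, hxS⟩
  -- dimension bookkeeping
  have e1 : finrank (ZMod 2) ↥(LinearMap.ker (T * S - 1)) =
      finrank (ZMod 2) ↥(LinearMap.range p) + finrank (ZMod 2) ↥(LinearMap.ker p) :=
    (LinearMap.finrank_range_add_finrank_ker p).symm
  have e2 : finrank (ZMod 2) ↥(LinearMap.ker p) = finrank (ZMod 2)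
      ↥(LinearMap.ker (T * S - 1) ⊓ LinearMap.ker (S - 1) : Submodule (ZMod 2) V) := by
    rw [hpdef, LinearMap.ker_comp, ← Submodule.finrank_map_subtype_eq
      (LinearMap.ker (T * S - 1)), Submodule.map_comap_subtype]
  have e3 : LinearMap.ker (T * S - 1) ⊓ LinearMap.ker (S - 1) =
      LinearMap.ker (T - 1) ⊓ LinearMap.ker (S - 1) := by
    ext x
    simp only [Submodule.mem_inf, hker1, Module.End.mul_apply]
    constructor
    · rintro ⟨h1, h2⟩; rw [h2] at h1; exact ⟨h1, h2⟩
    · rintro ⟨h1, h2⟩; exact ⟨by rw [h2, h1], h2⟩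
  have e4 : finrank (ZMod 2) ↥(LinearMap.range p) =
      finrank (ZMod 2) ↥(LinearMap.ker θ) := by
    rw [hZ, Submodule.finrank_map_subtype_eq]
  have e5 : LinearMap.ker (T - 1) ⊓ LinearMap.ker (S - 1) =
      B.orthogonal (LinearMap.range (T - 1) ⊔ LinearMap.range (S - 1)) := by
    rw [horth_inf, horthT, horthS]
  have e5' : finrank (ZMod 2) ↥(LinearMap.ker (T - 1) ⊓ LinearMap.ker (S - 1)) =
      finrank (ZMod 2) ↥(B.orthogonal (LinearMap.range (T - 1) ⊔ LinearMap.range (S - 1))) := by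
    rw [e5]
  obtain ⟨k, hk⟩ := alt_radical_parity ↥M θ hθalt
  have key : finrank (ZMod 2) ↥(LinearMap.range (T * S - 1)) +
      2 * finrank (ZMod 2) ↥(LinearMap.ker θ) + 2 * k =
      finrank (ZMod 2) ↥(LinearMap.range (T - 1)) +
      finrank (ZMod 2) ↥(LinearMap.range (S - 1)) := by
    have c1 := LinearMap.finrank_range_add_finrank_ker (T * S - 1)
    have c2 := horthdim (LinearMap.range (T - 1) ⊔ LinearMap.range (S - 1))
    have c3 := Submodule.finrank_sup_add_finrank_inf_eq
      (LinearMap.range (T - 1)) (LinearMap.range (S - 1))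
    have hMr : finrank (ZMod 2) ↥M =
        finrank (ZMod 2) ↥(LinearMap.range (T - 1) ⊓ LinearMap.range (S - 1)) := rfl
    have e6 : finrank (ZMod 2)
        ↥(LinearMap.ker (T * S - 1) ⊓ LinearMap.ker (S - 1) : Submodule (ZMod 2) V) =
        finrank (ZMod 2)
        ↥(B.orthogonal (LinearMap.range (T - 1) ⊔ LinearMap.range (S - 1))) := by
      rw [e3, e5]
    omega
  have := congrArg (fun t : ℕ => (t : ZMod 2)) key
  push_cast at this
  rw [show ((2 : ZMod 2)) = 0 by decide] at this
  simpa using this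
end

section
/- Let V be 4-dimensional over Z/2 with non-degenerate quadratic form g of Arf invariant 0, and let V₁, V₂ be the two distinguished sets as above. Every T ∈ O(V,g) either maps each of V₁, V₂ into itself, or maps V₁ into V₂ and V₂ into V₁. -/
/-!
A nonzero vector of `V'` has `g' = 1`, so the unit vectors of `g' ⊕ g'` are exactly `V₁ ∪ V₂`,
and for two distinct unit vectors `p, q` the polar form is `1 + g' p.1 + g' q.1`: it is `1` on
pairs from the same `V_k` and `0` across. An isometry preserves the polar form and is injective,
so `g' (T p).1 + g' (T q).1 = g' p.1 + g' q.1` for unit vectors `p, q`. Hence the shift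
`g' (T p).1 - g' p.1` is the same for all unit vectors `p`: if it is `0`, `T` preserves `V₁` and
`V₂`, and if it is `1`, `T` swaps them.
-/

open QuadraticMap (polar)

section Polar

variable {M N : Type*} [AddCommGroup M] [AddCommGroup N] {f : M → N}

lemma QuadraticMap.polar_map_of_forall_map_eq {F : Type*} [FunLike F M M]
    [AddMonoidHomClass F M M] {T : F} (hT : ∀ x, f (T x) = f x) (x y : M) :
    polar f (T x) (T y) = polar f x y := by
  simp only [polar, ← map_add, hT]

lemma QuadraticMap.polar_zero_left_of_map_zero (hf : f 0 = 0) (y : M) : polar f 0 y = 0 := by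
  simp [polar, hf]

lemma QuadraticMap.polar_zero_right_of_map_zero (hf : f 0 = 0) (x : M) : polar f x 0 = 0 := by
  simp [polar, hf]

def orthSum (f : M → N) (p : M × M) : N := f p.1 + f p.2

lemma polar_orthSum (p q : M × M) :
    polar (orthSum f) p q = polar f p.1 q.1 + polar f p.2 q.2 := by
  simp only [polar, orthSum, Prod.fst_add, Prod.snd_add]
  abel

end Polar

section Anisotropic

open QuadraticMap

variable {V : Type*} [AddCommGroup V] {g : V → ZMod 2}

lemma polar_eq_one_of_ne [Module (ZMod 2) V] (hg1 : ∀ x, x ≠ 0 → g x = 1) {x y : V}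
    (hx : x ≠ 0) (hy : y ≠ 0) (hxy : x ≠ y) : polar g x y = 1 := by
  have hsum : x + y ≠ 0 := by
    rwa [← ZModModule.sub_eq_add, sub_ne_zero]
  rw [polar, hg1 _ hsum, hg1 _ hx, hg1 _ hy]
  decide

lemma orthSum_eq_one_iff (hg0 : g 0 = 0) (hg1 : ∀ x, x ≠ 0 → g x = 1) (p : V × V) :
    orthSum g p = 1 ↔ (p.1 ≠ 0 ∧ p.2 = 0) ∨ (p.1 = 0 ∧ p.2 ≠ 0) := by
  by_cases h1 : p.1 = 0 <;> by_cases h2 : p.2 = 0 <;> simp [orthSum, h1, h2, hg0, hg1]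

lemma polar_orthSum_of_ne [Module (ZMod 2) V] (hg0 : g 0 = 0) (hg1 : ∀ x, x ≠ 0 → g x = 1)
    {p q : V × V} (hp : orthSum g p = 1) (hq : orthSum g q = 1) (hpq : p ≠ q) :
    polar (orthSum g) p q = 1 + g p.1 + g q.1 := by
  rw [orthSum_eq_one_iff hg0 hg1] at hp hq
  rw [polar_orthSum]
  rcases hp with ⟨hp1, hp2⟩ | ⟨hp1, hp2⟩ <;> rcases hq with ⟨hq1, hq2⟩ | ⟨hq1, hq2⟩
  · have hne : p.1 ≠ q.1 := fun h ↦ hpq (Prod.ext h (hp2.trans hq2.symm))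
    rw [polar_eq_one_of_ne hg1 hp1 hq1 hne, hp2, hq2, polar_zero_left_of_map_zero hg0,
      hg1 _ hp1, hg1 _ hq1]
    decide
  · rw [hp2, hq1, polar_zero_right_of_map_zero hg0, polar_zero_left_of_map_zero hg0, hg0,
      hg1 _ hp1]
    decide
  · rw [hp1, hq2, polar_zero_right_of_map_zero hg0, polar_zero_left_of_map_zero hg0, hg0,
      hg1 _ hq1]
    decide
  · have hne : p.2 ≠ q.2 := fun h ↦ hpq (Prod.ext (hp1.trans hq1.symm) h)
    rw [polar_eq_one_of_ne hg1 hp2 hq2 hne, hp1, hq1, polar_zero_left_of_map_zero hg0, hg0]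
    decide

lemma fst_ne_zero_and_snd_eq_zero_iff (hg0 : g 0 = 0) (hg1 : ∀ x, x ≠ 0 → g x = 1)
    {p : V × V} (hp : orthSum g p = 1) : p.1 ≠ 0 ∧ p.2 = 0 ↔ g p.1 = 1 := by
  rcases (orthSum_eq_one_iff hg0 hg1 p).1 hp with ⟨hp1, hp2⟩ | ⟨hp1, hp2⟩ <;>
    simp [hp1, hp2, hg0, hg1]

lemma fst_eq_zero_and_snd_ne_zero_iff (hg0 : g 0 = 0) (hg1 : ∀ x, x ≠ 0 → g x = 1)
    {p : V × V} (hp : orthSum g p = 1) : p.1 = 0 ∧ p.2 ≠ 0 ↔ g p.1 = 0 := by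
  rcases (orthSum_eq_one_iff hg0 hg1 p).1 hp with ⟨hp1, hp2⟩ | ⟨hp1, hp2⟩ <;>
    simp [hp1, hp2, hg0, hg1]

variable [Module (ZMod 2) V] {F : Type*} [FunLike F (V × V) (V × V)]
  [AddMonoidHomClass F (V × V) (V × V)] {T : F}

lemma map_fst_add_map_fst (hg0 : g 0 = 0) (hg1 : ∀ x, x ≠ 0 → g x = 1)
    (hT : Function.Injective T) (hTg : ∀ p, orthSum g (T p) = orthSum g p) {p q : V × V}
    (hp : orthSum g p = 1) (hq : orthSum g q = 1) :
    g (T p).1 + g (T q).1 = g p.1 + g q.1 := by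
  obtain rfl | hpq := eq_or_ne p q
  · simp only [CharTwo.add_self_eq_zero]
  have hTp : orthSum g (T p) = 1 := (hTg p).trans hp
  have hTq : orthSum g (T q) = 1 := (hTg q).trans hq
  have hpolar := polar_map_of_forall_map_eq hTg p q
  rw [polar_orthSum_of_ne hg0 hg1 hTp hTq (hT.ne hpq), polar_orthSum_of_ne hg0 hg1 hp hq hpq]
    at hpolar
  linear_combination hpolar

lemma exists_forall_map_fst_eq_add (hg0 : g 0 = 0) (hg1 : ∀ x, x ≠ 0 → g x = 1)
    (hT : Function.Injective T) (hTg : ∀ p, orthSum g (T p) = orthSum g p) :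
    ∃ c, ∀ p, orthSum g p = 1 → g (T p).1 = g p.1 + c := by
  by_cases h : ∃ q, orthSum g q = 1
  · obtain ⟨q, hq⟩ := h
    refine ⟨g (T q).1 + g q.1, fun p hp ↦ ?_⟩
    have := map_fst_add_map_fst hg0 hg1 hT hTg hp hq
    grind
  · exact ⟨0, fun p hp ↦ absurd ⟨p, hp⟩ h⟩

end Anisotropic

theorem stmt15_general {V' : Type*} [AddCommGroup V'] [Module (ZMod 2) V']
    (g' : V' → ZMod 2) (hg'0 : g' 0 = 0) (hg'1 : ∀ x : V', x ≠ 0 → g' x = 1)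
    (T : (V' × V') →ₗ[ZMod 2] (V' × V')) (hTb : Function.Bijective T)
    (hTg : ∀ p : V' × V', g' (T p).1 + g' (T p).2 = g' p.1 + g' p.2) :
    ((∀ p : V' × V', p.1 ≠ 0 ∧ p.2 = 0 → (T p).1 ≠ 0 ∧ (T p).2 = 0) ∧
     (∀ p : V' × V', p.1 = 0 ∧ p.2 ≠ 0 → (T p).1 = 0 ∧ (T p).2 ≠ 0)) ∨
    ((∀ p : V' × V', p.1 ≠ 0 ∧ p.2 = 0 → (T p).1 = 0 ∧ (T p).2 ≠ 0) ∧
     (∀ p : V' × V', p.1 = 0 ∧ p.2 ≠ 0 → (T p).1 ≠ 0 ∧ (T p).2 = 0)) := by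
  obtain ⟨c, hc⟩ := exists_forall_map_fst_eq_add hg'0 hg'1 hTb.1 hTg
  have hunit : ∀ p : V' × V', (p.1 ≠ 0 ∧ p.2 = 0) ∨ (p.1 = 0 ∧ p.2 ≠ 0) →
      orthSum g' p = 1 ∧ orthSum g' (T p) = 1 := fun p hp ↦
    ⟨(orthSum_eq_one_iff hg'0 hg'1 p).2 hp,
      (hTg p).trans ((orthSum_eq_one_iff hg'0 hg'1 p).2 hp)⟩
  have h₁ : ∀ p, orthSum g' p = 1 → (p.1 ≠ 0 ∧ p.2 = 0 ↔ g' p.1 = 1) := fun _ ↦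
    fst_ne_zero_and_snd_eq_zero_iff hg'0 hg'1
  have h₂ : ∀ p, orthSum g' p = 1 → (p.1 = 0 ∧ p.2 ≠ 0 ↔ g' p.1 = 0) := fun _ ↦
    fst_eq_zero_and_snd_ne_zero_iff hg'0 hg'1
  rcases (by decide : ∀ c : ZMod 2, c = 0 ∨ c = 1) c with rfl | rfl
  · left
    constructor <;> intro p hp <;> obtain ⟨hu, hTu⟩ := hunit p (by tauto)
    · rw [h₁ _ hTu, hc p hu, add_zero, ← h₁ _ hu]; exact hp
    · rw [h₂ _ hTu, hc p hu, add_zero, ← h₂ _ hu]; exact hp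
  · right
    constructor <;> intro p hp <;> obtain ⟨hu, hTu⟩ := hunit p (by tauto)
    · rw [h₂ _ hTu, hc p hu, (h₁ _ hu).1 hp]; rfl
    · rw [h₁ _ hTu, hc p hu, (h₂ _ hu).1 hp]; rfl

theorem stmt15 {V' : Type*} [AddCommGroup V'] [Module (ZMod 2) V']
    [FiniteDimensional (ZMod 2) V']
    (hdim : Module.finrank (ZMod 2) V' = 2)
    (g' : V' → ZMod 2) (hg'0 : g' 0 = 0) (hg'1 : ∀ x : V', x ≠ 0 → g' x = 1)
    (B' : LinearMap.BilinForm (ZMod 2) V')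
    (hquad : ∀ x y, g' (x + y) = g' x + g' y + B' x y)
    (T : (V' × V') →ₗ[ZMod 2] (V' × V')) (hTb : Function.Bijective T)
    (hTg : ∀ p : V' × V', g' (T p).1 + g' (T p).2 = g' p.1 + g' p.2) :
    ((∀ p : V' × V', p.1 ≠ 0 ∧ p.2 = 0 → (T p).1 ≠ 0 ∧ (T p).2 = 0) ∧
     (∀ p : V' × V', p.1 = 0 ∧ p.2 ≠ 0 → (T p).1 = 0 ∧ (T p).2 ≠ 0)) ∨
    ((∀ p : V' × V', p.1 ≠ 0 ∧ p.2 = 0 → (T p).1 = 0 ∧ (T p).2 ≠ 0) ∧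
     (∀ p : V' × V', p.1 = 0 ∧ p.2 ≠ 0 → (T p).1 ≠ 0 ∧ (T p).2 = 0)) :=
  stmt15_general g' hg'0 hg'1 T hTb hTg
end

section
/- Let V be 4-dimensional over Z/2 with non-degenerate quadratic form g of Arf invariant 0. If T ∈ O(V,g) is a U-map (i.e. T interchanges the sets V₁ and V₂) and T² = Id, then rank(T − Id) is even. -/
/-!
Over `𝔽₂` an involution `T` satisfies `(T - 1)² = T² - 1 = 0`, so `range (T - 1) ≤ ker (T - 1)` and
`rank (T - 1) ≤ 2`. On the other hand a U-map moves every nonzero vector of `V' × 0` off that plane,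
so `ker (T - 1)` meets this plane trivially and `rank (T - 1) ≥ dim V' = 2`. Hence `rank (T - 1) = 2`.
-/

open Module LinearMap

theorem Module.End.sub_one_mul_self_eq_zero {R M : Type*} [CommRing R] [CharP R 2]
    [AddCommGroup M] [Module R M] {T : Module.End R M} (hT : T * T = 1) :
    (T - 1) * (T - 1) = 0 := by
  have h2 : (2 : Module.End R M) = 0 := by
    rw [← map_ofNat (algebraMap R (Module.End R M)) 2, CharTwo.two_eq_zero, map_zero]
  calc (T - 1) * (T - 1) = T * T + 1 - 2 * T := by noncomm_ring
    _ = 2 * (1 - T) := by rw [hT]; noncomm_ring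
    _ = 0 := by rw [h2, zero_mul]

section DivisionRing

variable {K V V₂ : Type*} [DivisionRing K] [AddCommGroup V] [Module K V] [FiniteDimensional K V]
  [AddCommGroup V₂] [Module K V₂]

theorem two_mul_finrank_range_le_of_mul_self_eq_zero {f : Module.End K V} (hf : f * f = 0) :
    2 * finrank K (range f) ≤ finrank K V := by
  have hle : finrank K (range f) ≤ finrank K (ker f) :=
    Submodule.finrank_mono (range_le_ker_iff.mpr hf)
  have := f.finrank_range_add_finrank_ker
  omega

theorem finrank_le_finrank_range_of_disjoint_ker (f : V →ₗ[K] V₂) {W : Submodule K V}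
    (hW : Disjoint W (ker f)) : finrank K W ≤ finrank K (range f) := by
  have := Submodule.finrank_add_finrank_le_of_disjoint hW
  have := f.finrank_range_add_finrank_ker
  omega

end DivisionRing

theorem disjoint_range_inl_ker_sub_one {R M N : Type*} [Ring R] [AddCommGroup M] [Module R M]
    [AddCommGroup N] [Module R N] {T : Module.End R (M × N)}
    (hT : ∀ x : M, x ≠ 0 → (T (x, 0)).1 = 0) :
    Disjoint (range (inl R M N)) (ker (T - 1)) := by
  rw [Submodule.disjoint_def]
  rintro _ ⟨x, rfl⟩ hfix
  have hfixed : T (x, 0) = (x, 0) := sub_eq_zero.mp hfix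
  by_contra hne
  have hx : x ≠ 0 := fun h => hne (by simp [h])
  exact hx (by simpa [hfixed] using hT x hx)

theorem stmt16_general {V' : Type*} [AddCommGroup V'] [Module (ZMod 2) V']
    [FiniteDimensional (ZMod 2) V']
    (hdim : Module.finrank (ZMod 2) V' = 2)
    (T : Module.End (ZMod 2) (V' × V'))
    (hswap₁ : ∀ p : V' × V', p.1 ≠ 0 ∧ p.2 = 0 → (T p).1 = 0 ∧ (T p).2 ≠ 0)
    (hinv : T * T = 1) :
    Even (Module.finrank (ZMod 2) (LinearMap.range (T - 1))) := by
  have hupper := two_mul_finrank_range_le_of_mul_self_eq_zero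
    (Module.End.sub_one_mul_self_eq_zero hinv)
  have hlower := finrank_le_finrank_range_of_disjoint_ker (T - 1)
    (disjoint_range_inl_ker_sub_one fun x hx => (hswap₁ (x, 0) ⟨hx, rfl⟩).1)
  rw [finrank_prod, hdim] at hupper
  rw [finrank_range_of_inj inl_injective, hdim] at hlower
  exact ⟨1, by omega⟩

theorem stmt16 {V' : Type*} [AddCommGroup V'] [Module (ZMod 2) V']
    [FiniteDimensional (ZMod 2) V']
    (hdim : Module.finrank (ZMod 2) V' = 2)
    (g' : V' → ZMod 2) (hg'0 : g' 0 = 0) (hg'1 : ∀ x : V', x ≠ 0 → g' x = 1)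
    (B' : LinearMap.BilinForm (ZMod 2) V')
    (hquad : ∀ x y, g' (x + y) = g' x + g' y + B' x y)
    (T : Module.End (ZMod 2) (V' × V')) (hTb : Function.Bijective T)
    (hTg : ∀ p : V' × V', g' (T p).1 + g' (T p).2 = g' p.1 + g' p.2)
    (hswap₁ : ∀ p : V' × V', p.1 ≠ 0 ∧ p.2 = 0 → (T p).1 = 0 ∧ (T p).2 ≠ 0)
    (hswap₂ : ∀ p : V' × V', p.1 = 0 ∧ p.2 ≠ 0 → (T p).1 ≠ 0 ∧ (T p).2 = 0)
    (hinv : T * T = 1) :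
    Even (Module.finrank (ZMod 2) (LinearMap.range (T - 1))) :=
  stmt16_general hdim T hswap₁ hinv
end

section
/- The subgroup of GL₂(Z) consisting of matrices whose reduction mod 2 is either the identity matrix I or the swap matrix J = [[0,1],[1,0]] is generated by the four matrices A₁ = [[1,2],[0,1]], A₂ = [[1,0],[2,1]], A₃ = [[−1,0],[0,1]], A₄ = [[0,1],[1,0]]. -/
open Matrix

def A₁ : GL (Fin 2) ℤ := ⟨!![1, 2; 0, 1], !![1, -2; 0, 1], by decide, by decide⟩
def A₂ : GL (Fin 2) ℤ := ⟨!![1, 0; 2, 1], !![1, 0; -2, 1], by decide, by decide⟩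
def A₃ : GL (Fin 2) ℤ := ⟨!![-1, 0; 0, 1], !![-1, 0; 0, 1], by decide, by decide⟩
def A₄ : GL (Fin 2) ℤ := ⟨!![0, 1; 1, 0], !![0, 1; 1, 0], by decide, by decide⟩

namespace Stmt17Aux

def B₁ : GL (Fin 2) ℤ := ⟨!![1, -2; 0, 1], !![1, 2; 0, 1], by decide, by decide⟩
def B₂ : GL (Fin 2) ℤ := ⟨!![1, 0; -2, 1], !![1, 0; 2, 1], by decide, by decide⟩

abbrev H : Subgroup (GL (Fin 2) ℤ) := Subgroup.closure {A₁, A₂, A₃, A₄}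

lemma m1 : A₁ ∈ H := Subgroup.subset_closure (by simp)
lemma m2 : A₂ ∈ H := Subgroup.subset_closure (by simp)
lemma m3 : A₃ ∈ H := Subgroup.subset_closure (by simp)
lemma m4 : A₄ ∈ H := Subgroup.subset_closure (by simp)

lemma mB1 : B₁ ∈ H := by
  have h : B₁ * A₁ = 1 := by
    refine Units.ext ?_
    show (!![1, -2; 0, 1] : Matrix (Fin 2) (Fin 2) ℤ) * !![1, 2; 0, 1] = 1
    decide
  have : B₁ = A₁⁻¹ := eq_inv_of_mul_eq_one_left h
  rw [this]; exact inv_mem m1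

lemma mB2 : B₂ ∈ H := by
  have h : B₂ * A₂ = 1 := by
    refine Units.ext ?_
    show (!![1, 0; -2, 1] : Matrix (Fin 2) (Fin 2) ℤ) * !![1, 0; 2, 1] = 1
    decide
  have : B₂ = A₂⁻¹ := eq_inv_of_mul_eq_one_left h
  rw [this]; exact inv_mem m2

/-- Base case: lower-left and upper-right entries zero. -/
lemma base (A : GL (Fin 2) ℤ) (hc : A.val 1 0 = 0) (hb : A.val 0 1 = 0) : A ∈ H := by
  have hdet : IsUnit (A.val.det) := (Matrix.isUnit_iff_isUnit_det _).mp A.isUnit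
  rw [Matrix.det_fin_two, hc, hb] at hdet
  simp only [mul_zero, zero_mul, sub_zero] at hdet
  have ha : A.val 0 0 = 1 ∨ A.val 0 0 = -1 :=
    Int.isUnit_iff.mp (isUnit_of_mul_isUnit_left hdet)
  have hd : A.val 1 1 = 1 ∨ A.val 1 1 = -1 :=
    Int.isUnit_iff.mp (isUnit_of_mul_isUnit_left (mul_comm (A.val 0 0) _ ▸ hdet))
  have hD34 : A₄ * A₃ * A₄ ∈ H := mul_mem (mul_mem m4 m3) m4
  rcases ha with ha | ha <;> rcases hd with hd | hd
  · have : A = 1 := by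
      refine Units.ext ?_
      ext i j
      fin_cases i <;> fin_cases j <;>
        simp_all [Matrix.one_apply]
    rw [this]; exact one_mem _
  · have : A = A₄ * A₃ * A₄ := by
      refine Units.ext ?_
      have : (A₄ * A₃ * A₄).val = !![1, 0; 0, -1] := by
        show (!![0,1;1,0] : Matrix (Fin 2) (Fin 2) ℤ) * !![-1,0;0,1] * !![0,1;1,0] = _
        decide
      rw [this]
      ext i j
      fin_cases i <;> fin_cases j <;> simp_all
    rw [this]; exact hD34
  · have : A = A₃ := by
      refine Units.ext ?_
      have : (A₃).val = !![-1, 0; 0, 1] := rfl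
      rw [this]
      ext i j
      fin_cases i <;> fin_cases j <;> simp_all
    rw [this]; exact m3
  · have : A = A₃ * (A₄ * A₃ * A₄) := by
      refine Units.ext ?_
      have : (A₃ * (A₄ * A₃ * A₄)).val = !![-1, 0; 0, -1] := by
        show (!![-1,0;0,1] : Matrix (Fin 2) (Fin 2) ℤ) *
          ((!![0,1;1,0] : Matrix (Fin 2) (Fin 2) ℤ) * !![-1,0;0,1] * !![0,1;1,0]) = _
        decide
      rw [this]
      ext i j
      fin_cases i <;> fin_cases j <;> simp_all
    rw [this]; exact mul_mem m3 hD34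

/-- Triangular case: kill the upper-right entry by column operations. -/
lemma key0 : ∀ m : ℕ, ∀ A : GL (Fin 2) ℤ, A.val 1 0 = 0 → 2 ∣ A.val 0 1 →
    (A.val 0 1).natAbs ≤ m → A ∈ H := by
  intro m
  induction m with
  | zero =>
    intro A hc hb hm
    exact base A hc (by omega)
  | succ m ih =>
    intro A hc hb hm
    by_cases hb0 : A.val 0 1 = 0
    · exact base A hc hb0
    · -- derive A.val 0 0 = ±1
      have hdet : IsUnit (A.val.det) := (Matrix.isUnit_iff_isUnit_det _).mp A.isUnit
      rw [Matrix.det_fin_two, hc] at hdet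
      simp only [mul_zero, sub_zero] at hdet
      have ha : A.val 0 0 = 1 ∨ A.val 0 0 = -1 :=
        Int.isUnit_iff.mp (isUnit_of_mul_isUnit_left hdet)
      set g : GL (Fin 2) ℤ := if (0 < A.val 0 0) ↔ (0 < A.val 0 1) then B₁ else A₁ with hg
      have hgH : g ∈ H := by rw [hg]; split <;> [exact mB1; exact m1]
      have hval : (A * g).val = A.val * g.val := rfl
      have hgval : g.val = !![1, (if (0 < A.val 0 0) ↔ (0 < A.val 0 1) then (-2:ℤ) else 2); 0, 1] := by
        rw [hg]; split <;> rfl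
      have e10 : (A * g).val 1 0 = A.val 1 0 := by
        rw [hval, hgval]; simp [Matrix.mul_apply, Fin.sum_univ_two]
      have e01 : (A * g).val 0 1 = A.val 0 0 * (if (0 < A.val 0 0) ↔ (0 < A.val 0 1) then (-2:ℤ) else 2) + A.val 0 1 := by
        rw [hval, hgval]; simp [Matrix.mul_apply, Fin.sum_univ_two]
      have hmem : A * g ∈ H := by
        apply ih (A * g)
        · rw [e10, hc]
        · rw [e01]; rcases ha with ha | ha <;> rw [ha] <;> split <;> omega
        · rw [e01]; rcases ha with ha | ha <;> rw [ha] <;> split <;>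
            rename_i hsplit <;> omega
      exact (H.mul_mem_cancel_right hgH).mp hmem

/-- Main descent on the first column. -/
lemma key : ∀ n : ℕ, ∀ A : GL (Fin 2) ℤ,
    (A.val 0 0).natAbs + (A.val 1 0).natAbs ≤ n →
    ¬ 2 ∣ A.val 0 0 → 2 ∣ A.val 0 1 → 2 ∣ A.val 1 0 → ¬ 2 ∣ A.val 1 1 →
    A ∈ H := by
  intro n
  induction n using Nat.strong_induction_on with
  | _ n ihn =>
  intro A hn ha hb hc hd
  by_cases hc0 : A.val 1 0 = 0
  · exact key0 _ A hc0 hb le_rfl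
  · have hane : (A.val 0 0).natAbs ≠ (A.val 1 0).natAbs := by omega
    rcases lt_or_gt_of_ne hane with hlt | hgt
    · -- |a| < |c| : row op on second row, using A₂ or B₂ on the left
      set g : GL (Fin 2) ℤ := if (0 < A.val 0 0) ↔ (0 < A.val 1 0) then B₂ else A₂ with hg
      have hgH : g ∈ H := by rw [hg]; split <;> [exact mB2; exact m2]
      set s : ℤ := if (0 < A.val 0 0) ↔ (0 < A.val 1 0) then (-2:ℤ) else 2 with hs
      have hgval : g.val = !![1, 0; s, 1] := by
        rw [hg, hs]; split <;> rfl
      have hval : (g * A).val = g.val * A.val := rfl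
      have e00 : (g * A).val 0 0 = A.val 0 0 := by
        rw [hval, hgval]; simp [Matrix.mul_apply, Fin.sum_univ_two]
      have e01 : (g * A).val 0 1 = A.val 0 1 := by
        rw [hval, hgval]; simp [Matrix.mul_apply, Fin.sum_univ_two]
      have e10 : (g * A).val 1 0 = s * A.val 0 0 + A.val 1 0 := by
        rw [hval, hgval]; simp [Matrix.mul_apply, Fin.sum_univ_two]
      have e11 : (g * A).val 1 1 = s * A.val 0 1 + A.val 1 1 := by
        rw [hval, hgval]; simp [Matrix.mul_apply, Fin.sum_univ_two]
      have hdvd2 : ¬ 2 ∣ A.val 0 0 := ha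
      have hmem : g * A ∈ H := by
        refine ihn (((g * A).val 0 0).natAbs + ((g * A).val 1 0).natAbs) ?_ (g * A) le_rfl ?_ ?_ ?_ ?_
        · rw [e00, e10, hs]
          split <;> rename_i hsplit <;> omega
        · rw [e00]; exact ha
        · rw [e01]; exact hb
        · rw [e10, hs]; split <;> omega
        · rw [e11, hs]; split <;> omega
      exact (H.mul_mem_cancel_left hgH).mp hmem
    · -- |c| < |a| : row op on first row, using A₁ or B₁ on the left
      set g : GL (Fin 2) ℤ := if (0 < A.val 0 0) ↔ (0 < A.val 1 0) then B₁ else A₁ with hg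
      have hgH : g ∈ H := by rw [hg]; split <;> [exact mB1; exact m1]
      set s : ℤ := if (0 < A.val 0 0) ↔ (0 < A.val 1 0) then (-2:ℤ) else 2 with hs
      have hgval : g.val = !![1, s; 0, 1] := by
        rw [hg, hs]; split <;> rfl
      have hval : (g * A).val = g.val * A.val := rfl
      have e00 : (g * A).val 0 0 = A.val 0 0 + s * A.val 1 0 := by
        rw [hval, hgval]; simp [Matrix.mul_apply, Fin.sum_univ_two]
      have e01 : (g * A).val 0 1 = A.val 0 1 + s * A.val 1 1 := by
        rw [hval, hgval]; simp [Matrix.mul_apply, Fin.sum_univ_two]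
      have e10 : (g * A).val 1 0 = A.val 1 0 := by
        rw [hval, hgval]; simp [Matrix.mul_apply, Fin.sum_univ_two]
      have e11 : (g * A).val 1 1 = A.val 1 1 := by
        rw [hval, hgval]; simp [Matrix.mul_apply, Fin.sum_univ_two]
      have hmem : g * A ∈ H := by
        refine ihn (((g * A).val 0 0).natAbs + ((g * A).val 1 0).natAbs) ?_ (g * A) le_rfl ?_ ?_ ?_ ?_
        · rw [e00, e10, hs]
          split <;> rename_i hsplit <;> omega
        · rw [e00, hs]; split <;> omega
        · rw [e01, hs]; split <;> omega
        · rw [e10]; exact hc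
        · rw [e11]; exact hd
      exact (H.mul_mem_cancel_left hgH).mp hmem

end Stmt17Aux

open Stmt17Aux in
theorem stmt17 (A : GL (Fin 2) ℤ) :
    ((A : Matrix (Fin 2) (Fin 2) ℤ).map (Int.cast : ℤ → ZMod 2) = 1 ∨
      (A : Matrix (Fin 2) (Fin 2) ℤ).map (Int.cast : ℤ → ZMod 2) = !![0, 1; 1, 0]) ↔
    A ∈ Subgroup.closure {A₁, A₂, A₃, A₄} := by
  have dvd_iff : ∀ x : ℤ, ((x : ZMod 2) = 0) ↔ 2 ∣ x := by
    intro x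
    simpa using ZMod.intCast_zmod_eq_zero_iff_dvd x 2
  have one_iff : ∀ x : ℤ, ((x : ZMod 2) = 1) → ¬ 2 ∣ x := by
    intro x hx h2
    rw [← dvd_iff] at h2
    rw [hx] at h2
    exact one_ne_zero h2
  constructor
  · rintro (h | h)
    · -- parities of identity
      have h00 : ((A.val 0 0 : ℤ) : ZMod 2) = 1 := by
        have := congrFun (congrFun h 0) 0; simpa [Matrix.map_apply, Matrix.one_apply] using this
      have h01 : ((A.val 0 1 : ℤ) : ZMod 2) = 0 := by
        have := congrFun (congrFun h 0) 1; simpa [Matrix.map_apply, Matrix.one_apply] using this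
      have h10 : ((A.val 1 0 : ℤ) : ZMod 2) = 0 := by
        have := congrFun (congrFun h 1) 0; simpa [Matrix.map_apply, Matrix.one_apply] using this
      have h11 : ((A.val 1 1 : ℤ) : ZMod 2) = 1 := by
        have := congrFun (congrFun h 1) 1; simpa [Matrix.map_apply, Matrix.one_apply] using this
      exact key _ A le_rfl (one_iff _ h00) ((dvd_iff _).mp h01) ((dvd_iff _).mp h10)
        (one_iff _ h11)
    · -- parities of the swap
      have h00 : ((A.val 0 0 : ℤ) : ZMod 2) = 0 := by
        have := congrFun (congrFun h 0) 0; simpa [Matrix.map_apply] using this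
      have h01 : ((A.val 0 1 : ℤ) : ZMod 2) = 1 := by
        have := congrFun (congrFun h 0) 1; simpa [Matrix.map_apply] using this
      have h10 : ((A.val 1 0 : ℤ) : ZMod 2) = 1 := by
        have := congrFun (congrFun h 1) 0; simpa [Matrix.map_apply] using this
      have h11 : ((A.val 1 1 : ℤ) : ZMod 2) = 0 := by
        have := congrFun (congrFun h 1) 1; simpa [Matrix.map_apply] using this
      have hval : (A₄ * A).val = !![0,1;1,0] * A.val := rfl
      have e00 : (A₄ * A).val 0 0 = A.val 1 0 := by
        rw [hval]; simp [Matrix.mul_apply, Fin.sum_univ_two]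
      have e01 : (A₄ * A).val 0 1 = A.val 1 1 := by
        rw [hval]; simp [Matrix.mul_apply, Fin.sum_univ_two]
      have e10 : (A₄ * A).val 1 0 = A.val 0 0 := by
        rw [hval]; simp [Matrix.mul_apply, Fin.sum_univ_two]
      have e11 : (A₄ * A).val 1 1 = A.val 0 1 := by
        rw [hval]; simp [Matrix.mul_apply, Fin.sum_univ_two]
      have hmem : A₄ * A ∈ H := by
        apply key _ (A₄ * A) le_rfl
        · rw [e00]; exact one_iff _ h10
        · rw [e01]; exact (dvd_iff _).mp h11
        · rw [e10]; exact (dvd_iff _).mp h00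
        · rw [e11]; exact one_iff _ h01
      exact (H.mul_mem_cancel_left m4).mp hmem
  · intro hA
    refine Subgroup.closure_induction
      (p := fun (x : GL (Fin 2) ℤ) _ => (x : Matrix (Fin 2) (Fin 2) ℤ).map (Int.cast : ℤ → ZMod 2) = 1 ∨
        (x : Matrix (Fin 2) (Fin 2) ℤ).map (Int.cast : ℤ → ZMod 2) = !![0, 1; 1, 0])
      ?_ ?_ ?_ ?_ hA
    · intro x hx
      simp only [Set.mem_insert_iff, Set.mem_singleton_iff] at hx
      rcases hx with rfl | rfl | rfl | rfl
      · left; decide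
      · left; decide
      · left; decide
      · right; decide
    · left
      show (1 : Matrix (Fin 2) (Fin 2) ℤ).map (Int.cast : ℤ → ZMod 2) = 1
      exact Matrix.map_one _ (by norm_num) (by norm_num)
    · intro x y _ _ hx hy
      have hmul : ((x * y : GL (Fin 2) ℤ) : Matrix (Fin 2) (Fin 2) ℤ).map (Int.cast : ℤ → ZMod 2)
          = (x : Matrix (Fin 2) (Fin 2) ℤ).map (Int.cast : ℤ → ZMod 2)
            * (y : Matrix (Fin 2) (Fin 2) ℤ).map (Int.cast : ℤ → ZMod 2) := by
        show ((x.val * y.val).map _) = _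
        exact Matrix.map_mul (f := Int.castRingHom (ZMod 2))
      rcases hx with hx | hx <;> rcases hy with hy | hy <;>
        rw [hmul, hx, hy] <;> simp <;> first | (left; decide) | (right; decide) | (left; rfl) | (right; rfl) | decide
    · intro x _ hx
      have hinv : ((x : Matrix (Fin 2) (Fin 2) ℤ).map (Int.cast : ℤ → ZMod 2))
          * ((x⁻¹ : GL (Fin 2) ℤ) : Matrix (Fin 2) (Fin 2) ℤ).map (Int.cast : ℤ → ZMod 2) = 1 := by
        have h1 : (x.val * (x⁻¹ : GL (Fin 2) ℤ).val) = 1 := by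
          rw [← Units.val_mul]; simp
        calc _ = ((x.val * (x⁻¹ : GL (Fin 2) ℤ).val).map (Int.cast : ℤ → ZMod 2)) :=
              (Matrix.map_mul (f := Int.castRingHom (ZMod 2))).symm
          _ = (1 : Matrix (Fin 2) (Fin 2) ℤ).map (Int.cast : ℤ → ZMod 2) := by rw [h1]
          _ = 1 := Matrix.map_one _ (by norm_num) (by norm_num)
      set y := ((x⁻¹ : GL (Fin 2) ℤ) : Matrix (Fin 2) (Fin 2) ℤ).map (Int.cast : ℤ → ZMod 2) with hy
      rcases hx with hx | hx
      · left
        rw [hx, one_mul] at hinv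
        exact hinv
      · right
        rw [hx] at hinv
        have hJJ : (!![0,1;1,0] : Matrix (Fin 2) (Fin 2) (ZMod 2)) * !![0,1;1,0] = 1 := by decide
        calc y = (!![0,1;1,0] * !![0,1;1,0]) * y := by rw [hJJ, one_mul]
          _ = !![0,1;1,0] * (!![0,1;1,0] * y) := by rw [mul_assoc]
          _ = !![0,1;1,0] := by rw [hinv, mul_one]
end

section
/- The subgroup of SL₂(Z) consisting of matrices whose reduction mod 2 is either the identity I or the swap matrix J = [[0,1],[1,0]] is generated by the three matrices [[1,2],[0,1]], [[1,0],[2,1]], and [[0,1],[−1,2]]. -/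
/-!
The matrices reducing mod 2 to `1` or `!![0, 1; 1, 0]` form the theta group, which is generated
by `S` and `T ^ 2`. For `A = !![a, b; c, d]` in it, `a` and `c` have opposite parity, so some
`m` gives `|a + 2 m c| < |c|`; since `S * T ^ (2 m) * A` has lower-left entry `a + 2 m c`,
descent on `|c|` reduces to `c = 0`, where `A = ± T ^ b` with `b` even and `-1 = S ^ 2`.
Finally `T ^ 2 = S₁` and `S₃ * S₁ = S⁻¹`.
-/

open Matrix

def S₁ : Matrix.SpecialLinearGroup (Fin 2) ℤ := ⟨!![1, 2; 0, 1], by decide⟩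
def S₂ : Matrix.SpecialLinearGroup (Fin 2) ℤ := ⟨!![1, 0; 2, 1], by decide⟩
def S₃ : Matrix.SpecialLinearGroup (Fin 2) ℤ := ⟨!![0, 1; -1, 2], by decide⟩

open MatrixGroups ModularGroup

theorem Subgroup.mem_zpowers_iff_of_sq_eq_one {G : Type*} [Group G] {g h : G} (hg : g ^ 2 = 1) :
    h ∈ Subgroup.zpowers g ↔ h = 1 ∨ h = g := by
  refine ⟨fun ⟨k, hk⟩ => ?_, ?_⟩
  · have hk2 : g ^ k = g ^ (k % 2) := by
      conv_lhs => rw [← Int.mul_ediv_add_emod k 2, _root_.zpow_add, _root_.zpow_mul]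
      simp [hg]
    rcases Int.emod_two_eq_zero_or_one k with h | h <;> simp_all
  · rintro (rfl | rfl)
    · exact one_mem _
    · exact Subgroup.mem_zpowers h

theorem Int.exists_natAbs_add_two_mul_mul_lt {a c : ℤ} (hc : c ≠ 0) (hac : a % 2 ≠ c % 2) :
    ∃ m : ℤ, (a + 2 * m * c).natAbs < c.natAbs := by
  have h2c : 2 * c ≠ 0 := by omega
  have hr₀ := Int.emod_nonneg a h2c
  have hr₁ := Int.emod_lt a h2c
  have hpar : a % (2 * c) % 2 = a % 2 := Int.emod_emod_of_dvd a (dvd_mul_right 2 c)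
  have hq (k : ℤ) : a + 2 * (k - a / (2 * c)) * c = a % (2 * c) + 2 * k * c := by
    linear_combination -Int.mul_ediv_add_emod a (2 * c)
  generalize a % (2 * c) = r at *
  by_cases hr : r < c.natAbs
  · exact ⟨0 - a / (2 * c), by rw [hq]; omega⟩
  -- `r = |c|` is excluded by parity, so `r - 2 |c|` lies strictly between `-|c|` and `0`.
  rcases lt_or_gt_of_ne hc with hneg | hpos
  · exact ⟨1 - a / (2 * c), by rw [hq]; omega⟩
  · exact ⟨-1 - a / (2 * c), by rw [hq]; omega⟩

def swapModTwo : SL(2, ZMod 2) := ⟨!![0, 1; 1, 0], by decide⟩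

def thetaGroup : Subgroup SL(2, ℤ) :=
  (Subgroup.zpowers swapModTwo).comap (SpecialLinearGroup.map (Int.castRingHom (ZMod 2)))

theorem mem_thetaGroup_iff {A : SL(2, ℤ)} :
    A ∈ thetaGroup ↔ (A : Matrix (Fin 2) (Fin 2) ℤ).map (Int.cast : ℤ → ZMod 2) = 1 ∨
      (A : Matrix (Fin 2) (Fin 2) ℤ).map (Int.cast : ℤ → ZMod 2) = !![0, 1; 1, 0] := by
  rw [thetaGroup, Subgroup.mem_comap, Subgroup.mem_zpowers_iff_of_sq_eq_one (by decide)]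
  exact or_congr Subtype.ext_iff Subtype.ext_iff

theorem emod_two_ne_of_mem_thetaGroup {A : SL(2, ℤ)} (hA : A ∈ thetaGroup) :
    A 0 0 % 2 ≠ A 1 0 % 2 ∧ A 0 0 % 2 ≠ A 0 1 % 2 := by
  have hcast : (A 0 0 : ZMod 2) ≠ A 1 0 ∧ (A 0 0 : ZMod 2) ≠ A 0 1 := by
    rcases mem_thetaGroup_iff.1 hA with h | h <;>
    · have h00 := congr_fun₂ h 0 0
      have h01 := congr_fun₂ h 0 1
      have h10 := congr_fun₂ h 1 0
      simp at h00 h01 h10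
      simp [h00, h01, h10]
  exact ⟨mt (ZMod.intCast_eq_intCast_iff' _ _ 2).2 hcast.1,
    mt (ZMod.intCast_eq_intCast_iff' _ _ 2).2 hcast.2⟩

theorem S₁_mem_thetaGroup : S₁ ∈ thetaGroup := mem_thetaGroup_iff.2 (.inl (by decide))

theorem S₂_mem_thetaGroup : S₂ ∈ thetaGroup := mem_thetaGroup_iff.2 (.inl (by decide))

theorem S₃_mem_thetaGroup : S₃ ∈ thetaGroup := mem_thetaGroup_iff.2 (.inr (by decide))

theorem T_sq_eq_S₁ : T ^ 2 = S₁ := by decide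

theorem S₃_mul_S₁_eq_S_inv : S₃ * S₁ = S⁻¹ := by
  rw [eq_inv_iff_mul_eq_one]
  decide

theorem S_mem_of_S₁_mem_of_S₃_mem {G : Subgroup SL(2, ℤ)} (h₁ : S₁ ∈ G) (h₃ : S₃ ∈ G) :
    S ∈ G := by
  rw [← inv_inv S, ← S₃_mul_S₁_eq_S_inv]
  exact inv_mem (mul_mem h₃ h₁)

theorem S_mul_T_zpow_mul_apply_one_zero (m : ℤ) (A : SL(2, ℤ)) :
    (S * T ^ m * A) 1 0 = A 0 0 + m * A 1 0 := by
  simp [coe_S, coe_T_zpow, mul_apply, Fin.sum_univ_two]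

theorem T_zpow_mem_of_even {G : Subgroup SL(2, ℤ)} (hT : T ^ 2 ∈ G) {n : ℤ} (hn : Even n) :
    T ^ n ∈ G := by
  obtain ⟨k, rfl⟩ := hn
  rw [← two_mul, _root_.zpow_mul]
  exact zpow_mem (by exact_mod_cast hT) k

section

variable {G : Subgroup SL(2, ℤ)} (hS : S ∈ G) (hT : T ^ 2 ∈ G)
include hS hT

theorem mem_of_mem_thetaGroup_of_apply_one_zero_eq_zero {A : SL(2, ℤ)} (hA : A ∈ thetaGroup)
    (hc : A 1 0 = 0) : A ∈ G := by
  have had : A 0 0 * A 1 1 = 1 := by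
    have := A.det_coe
    rw [det_fin_two, hc] at this
    lia
  have hb : Even (A 0 1) := by
    have := emod_two_ne_of_mem_thetaGroup hA
    rw [hc] at this
    rw [Int.even_iff]
    omega
  rcases Int.eq_one_or_neg_one_of_mul_eq_one' had with ⟨ha, hd⟩ | ⟨ha, hd⟩
  · have hAT : A = T ^ A 0 1 := by
      ext i j; fin_cases i <;> fin_cases j <;> simp [ha, hc, hd, coe_T_zpow]
    rw [hAT]
    exact T_zpow_mem_of_even hT hb
  · have hAT : A = S * S * T ^ (-A 0 1) := by
      ext i j; fin_cases i <;> fin_cases j <;>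
        simp [ha, hc, hd, coe_T_zpow, coe_S, mul_apply, Fin.sum_univ_two]
    rw [hAT]
    exact mul_mem (mul_mem hS hS) (T_zpow_mem_of_even hT hb.neg)

theorem thetaGroup_le : thetaGroup ≤ G := by
  intro A hA
  induction hn : (A 1 0).natAbs using Nat.strong_induction_on generalizing A with
  | _ n ih =>
  by_cases hc : A 1 0 = 0
  · exact mem_of_mem_thetaGroup_of_apply_one_zero_eq_zero hS hT hA hc
  obtain ⟨m, hm⟩ := Int.exists_natAbs_add_two_mul_mul_lt hc (emod_two_ne_of_mem_thetaGroup hA).1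
  have hg : S * T ^ (2 * m) ∈ thetaGroup :=
    mul_mem (S_mem_of_S₁_mem_of_S₃_mem S₁_mem_thetaGroup S₃_mem_thetaGroup)
      (T_zpow_mem_of_even (T_sq_eq_S₁ ▸ S₁_mem_thetaGroup) (even_two_mul m))
  have hgG : S * T ^ (2 * m) ∈ G := mul_mem hS (T_zpow_mem_of_even hT (even_two_mul m))
  have hgA : S * T ^ (2 * m) * A ∈ G :=
    ih _ (hn ▸ S_mul_T_zpow_mul_apply_one_zero _ A ▸ hm) (mul_mem hg hA) rfl
  simpa only [inv_mul_cancel_left] using mul_mem (inv_mem hgG) hgA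

end

theorem closure_S₁_S₂_S₃_eq_thetaGroup : Subgroup.closure {S₁, S₂, S₃} = thetaGroup := by
  have hS₁ : S₁ ∈ Subgroup.closure {S₁, S₂, S₃} := Subgroup.subset_closure (by simp)
  have hS₃ : S₃ ∈ Subgroup.closure {S₁, S₂, S₃} := Subgroup.subset_closure (by simp)
  refine le_antisymm ((Subgroup.closure_le _).2 ?_)
    (thetaGroup_le (S_mem_of_S₁_mem_of_S₃_mem hS₁ hS₃) (T_sq_eq_S₁ ▸ hS₁))
  rintro _ (rfl | rfl | rfl)
  exacts [S₁_mem_thetaGroup, S₂_mem_thetaGroup, S₃_mem_thetaGroup]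

theorem stmt18 (A : Matrix.SpecialLinearGroup (Fin 2) ℤ) :
    ((A : Matrix (Fin 2) (Fin 2) ℤ).map (Int.cast : ℤ → ZMod 2) = 1 ∨
      (A : Matrix (Fin 2) (Fin 2) ℤ).map (Int.cast : ℤ → ZMod 2) = !![0, 1; 1, 0]) ↔
    A ∈ Subgroup.closure {S₁, S₂, S₃} := by
  rw [closure_S₁_S₂_S₃_eq_thetaGroup, mem_thetaGroup_iff]
end
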